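/- arXiv:2512.03554 — 2 statements merged into one kernel-verified Lean document; each statement's English description precedes it below -/
import Mathlib

section
/- Let μ = 4 and let S_+ (resp. S_−) be the ℂQ/I-module with ℂ at every vertex, all α_i acting as the identity and all β_i as zero (resp. all α_i as zero and all β_i as the identity). Then S_+ and S_− are 3-spherical objects of D = D^b mod(ℂQ/I): RHom_D(S_±, S_±) ≅ ℂ ⊕ ℂ[−3] and S_D(S_±) ≅ S_±[3] for the Serre functor S_D. -/
namespace CHS

open CategoryTheory Limits Pretriangulated

universe v u

variable {D : Type u} [Category.{v} D]

section Defs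

variable [Preadditive D] [HasZeroObject D] [HasShift D ℤ]
  [∀ n : ℤ, (shiftFunctor D n).Additive] [Pretriangulated D] [Linear ℂ D]

/-- `homsAre X Y c` says that for each `p : ℤ` the Hom space `Hom(X, Y⟦p⟧)` is isomorphic to
`ℂ^{c p}`.  Since an object `V` of `D^b(mod ℂ)` is determined up to isomorphism by the dimensions
of its cohomologies, and `H^p(RHom(X, Y)) = Hom(X, Y[p])`, this is a faithful rendering of
`RHom(X, Y) ≅ ⊕_p ℂ^{c p}[-p]` in `D^b(mod ℂ)`. -/
def homsAre (X Y : D) (c : ℤ → ℕ) : Prop :=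
  ∀ p : ℤ, Nonempty ((X ⟶ Y⟦p⟧) ≃ₗ[ℂ] (Fin (c p) → ℂ))

/-- `E` is an exceptional object: `RHom(E, E) ≅ ℂ·id`. -/
def IsExceptionalObj (X : D) : Prop :=
  homsAre X X fun p => if p = 0 then 1 else 0

/-- Membership in the smallest strictly full triangulated subcategory of `D`
containing the set `S`. -/
inductive inTriaClosure (S : Set D) : D → Prop
  | of {X : D} (hX : X ∈ S) : inTriaClosure S X
  | zero {X : D} (hX : IsZero X) : inTriaClosure S X
  | iso {X Y : D} (e : X ≅ Y) (hX : inTriaClosure S X) : inTriaClosure S Y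
  | shift {X : D} (n : ℤ) (hX : inTriaClosure S X) : inTriaClosure S (X⟦n⟧)
  | ext {T : Triangle D} (hT : T ∈ distinguishedTriangles (C := D))
      (h₁ : inTriaClosure S T.obj₁) (h₃ : inTriaClosure S T.obj₃) : inTriaClosure S T.obj₂

/-- `(E 0, …, E (n-1))` is an exceptional collection. -/
def IsExceptionalCollection {n : ℕ} (E : Fin n → D) : Prop :=
  (∀ i, IsExceptionalObj (E i)) ∧
    ∀ i j : Fin n, j < i → ∀ (p : ℤ) (f : E i ⟶ (E j)⟦p⟧), f = 0

/-- The collection generates `D` as a triangulated category. -/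
def IsFullCollection {n : ℕ} (E : Fin n → D) : Prop :=
  ∀ X : D, inTriaClosure (Set.range E) X

/-- Full exceptional collection. -/
def IsFEC {n : ℕ} (E : Fin n → D) : Prop :=
  IsExceptionalCollection E ∧ IsFullCollection E

/-- A collection is strong if `Hom(E_i, E_j[p]) = 0` for all `i, j` and all `p ≠ 0`. -/
def IsStrongCollection {n : ℕ} (E : Fin n → D) : Prop :=
  ∀ i j : Fin n, ∀ p : ℤ, p ≠ 0 → ∀ f : E i ⟶ (E j)⟦p⟧, f = 0

/-- composite of the chain of morphisms `P (j+k) ⟶ P (j+k-1) ⟶ ⋯ ⟶ P j`. -/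
def pathComp (P : ℕ → D) (f : ∀ i : ℕ, P (i + 1) ⟶ P i) (j : ℕ) : ∀ k : ℕ, (P (j + k) ⟶ P j)
  | 0 => 𝟙 _
  | k + 1 => f (j + k) ≫ pathComp P f j k

/-- A presentation of the triangulated category `D = D^b(mod ℂQ/I)` for the quiver `Q` with
vertices `1, …, μ`, double arrows `α_i, β_i : i → i+1` and relations
`α_i β_{i+1} = β_i α_{i+1} = 0`:  `P i` is the indecomposable projective at the vertex `i`
(for `1 ≤ i ≤ μ`), `a i` (resp. `b i`) is the morphism `P (i+1) ⟶ P i` given by right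
multiplication with the arrow `α_i` (resp. `β_i`); `(P μ, …, P 1)` is a full strong exceptional
collection, `Hom(P i, P j)` has as a basis the (two, for `j < i`) nonzero paths from `j` to `i`,
namely the pure `α`-path and the pure `β`-path, and the mixed composites vanish. -/
structure Setup (μ : ℕ) (D : Type u) [Category.{v} D] [Preadditive D] [HasZeroObject D]
    [HasShift D ℤ] [∀ n : ℤ, (shiftFunctor D n).Additive] [Pretriangulated D] [Linear ℂ D] where
  P : ℕ → D
  a : ∀ i : ℕ, P (i + 1) ⟶ P i
  b : ∀ i : ℕ, P (i + 1) ⟶ P i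
  rel_ab : ∀ i : ℕ, a (i + 1) ≫ b i = 0
  rel_ba : ∀ i : ℕ, b (i + 1) ≫ a i = 0
  hom_dims : ∀ i j : ℕ, 1 ≤ i → i ≤ μ → 1 ≤ j → j ≤ μ →
      homsAre (P i) (P j)
        (fun p => if p = 0 then (if i = j then 1 else if j < i then 2 else 0) else 0)
  hom_basis : ∀ j k : ℕ, 1 ≤ j → 1 ≤ k → j + k ≤ μ →
      ∃ B : Module.Basis (Fin 2) ℂ (P (j + k) ⟶ P j),
        B 0 = pathComp P a j k ∧ B 1 = pathComp P b j k
  full : ∀ X : D, inTriaClosure {Y : D | ∃ i : ℕ, 1 ≤ i ∧ i ≤ μ ∧ Y = P i} X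

/-- A Serre functor on `D`: an autoequivalence `S` together with perfect pairings
`Hom(X, Y) ⊗ Hom(Y, S X) → ℂ`, `(f, g) ↦ tr (f ≫ g)`, realizing the bifunctorial
isomorphisms `Hom(X, Y) ≅ Hom(Y, S X)^*`. -/
structure SerreData (D : Type u) [Category.{v} D] [Preadditive D] [Linear ℂ D] where
  S : D ⥤ D
  isEquivalence : S.IsEquivalence
  trace : ∀ X : D, (X ⟶ S.obj X) →ₗ[ℂ] ℂ
  comm : ∀ {X Y : D} (h : Y ⟶ X) (u : X ⟶ S.obj Y),
      trace Y (h ≫ u) = trace X (u ≫ S.map h)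
  nondeg : ∀ {X Y : D} (f : X ⟶ Y), f ≠ 0 → ∃ g : Y ⟶ S.obj X, trace X (f ≫ g) ≠ 0
  perfect : ∀ {X Y : D} (φ : (Y ⟶ S.obj X) →ₗ[ℂ] ℂ), ∃ f : X ⟶ Y, ∀ g, φ g = trace X (f ≫ g)

/-- Data exhibiting `S` as (an object isomorphic to) the totalization of the four-term
complex `W → X → Y → Z` (with `Z` in degree `0`) of objects of `D`;
`K₁ = [W → X]`, `K₂ = [W → X → Y]` are the intermediate (iterated) cones. -/
structure TotData (W X Y Z S : D) (f : W ⟶ X) (g : X ⟶ Y) (h : Y ⟶ Z) where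
  K₁ : D
  ι₁ : X ⟶ K₁
  δ₁ : K₁ ⟶ W⟦(1 : ℤ)⟧
  tri₁ : Triangle.mk f ι₁ δ₁ ∈ distinguishedTriangles (C := D)
  v₁ : K₁ ⟶ Y
  fac₁ : ι₁ ≫ v₁ = g
  K₂ : D
  ι₂ : Y ⟶ K₂
  δ₂ : K₂ ⟶ K₁⟦(1 : ℤ)⟧
  tri₂ : Triangle.mk v₁ ι₂ δ₂ ∈ distinguishedTriangles (C := D)
  v₂ : K₂ ⟶ Z
  fac₂ : ι₂ ≫ v₂ = h
  ι₃ : Z ⟶ S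
  δ₃ : S ⟶ K₂⟦(1 : ℤ)⟧
  tri₃ : Triangle.mk v₂ ι₃ δ₃ ∈ distinguishedTriangles (C := D)

end Defs

/-- `n`-th power of an (auto)equivalence. -/
def eqPowNat (T : D ≌ D) : ℕ → (D ≌ D)
  | 0 => CategoryTheory.Equivalence.refl
  | n + 1 => (eqPowNat T n).trans T

/-- `k`-th power (`k : ℤ`) of an autoequivalence. -/
def eqPow (T : D ≌ D) : ℤ → (D ≌ D)
  | Int.ofNat n => eqPowNat T n
  | Int.negSucc n => (eqPowNat T (n + 1)).symm

section Twist

variable [Preadditive D] [HasZeroObject D] [HasShift D ℤ]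
  [∀ n : ℤ, (shiftFunctor D n).Additive] [Pretriangulated D] [Linear ℂ D]
  [HasFiniteBiproducts D] [∀ X Y : D, FiniteDimensional ℂ (X ⟶ Y)]

/-- The object `⊕_{|p| ≤ N} Hom(S, X[p]) ⊗ S[-p]`, i.e. `RHom(S,X) ⊗ S` when
`Hom(S, X[p]) = 0` for `|p| > N`. -/
noncomputable def sTensor (S X : D) (N : ℕ) : D :=
  biproduct (fun pq : Σ p : (Finset.Icc (-(N : ℤ)) (N : ℤ)),
      Fin (Module.finrank ℂ (S ⟶ X⟦(p.1 : ℤ)⟧)) => S⟦(-(pq.1.1 : ℤ))⟧)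

/-- The canonical evaluation morphism `RHom(S,X) ⊗ S ⟶ X` (each basis vector
`f : S ⟶ X⟦p⟧` of `Hom(S, X⟦p⟧)` evaluates via `f⟦-p⟧` composed with `X⟦p⟧⟦-p⟧ ≅ X`). -/
noncomputable def sTensorEv (S X : D) (N : ℕ) : sTensor S X N ⟶ X :=
  biproduct.desc fun pq =>
    ((Module.finBasis ℂ (S ⟶ X⟦(pq.1.1 : ℤ)⟧) pq.2)⟦(-(pq.1.1 : ℤ))⟧') ≫
      (shiftFunctorCompIsoId D (pq.1.1 : ℤ) (-(pq.1.1 : ℤ)) (by ring)).hom.app X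

/-- `Hom(S, X[p]) = 0` for `|p| > N`. -/
def homBound (S X : D) (N : ℕ) : Prop :=
  ∀ p : ℤ, ((p < -(N : ℤ)) ∨ ((N : ℤ) < p)) → ∀ f : S ⟶ X⟦p⟧, f = 0

/-- `L` is the left mutation `L_A B`, i.e. there is a distinguished triangle
`L → RHom(A, B) ⊗ A → B → L[1]` whose middle map is the canonical evaluation. -/
def IsLeftMutation (A B L : D) : Prop :=
  ∃ (N : ℕ) (u : L ⟶ sTensor A B N) (w : B ⟶ L⟦(1 : ℤ)⟧),
    homBound A B N ∧ Triangle.mk u (sTensorEv A B N) w ∈ distinguishedTriangles (C := D)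

/-- `T` is the spherical twist along `S`: it is an autoequivalence and for every `X` there
is a distinguished triangle `RHom(S, X) ⊗ S → X → T X → (RHom(S, X) ⊗ S)[1]` whose first
map is the canonical evaluation. -/
structure IsSphericalTwist (S : D) (T : D ⥤ D) : Prop where
  isEquivalence : T.IsEquivalence
  twistTriangle : ∀ X : D, ∃ (N : ℕ) (g : X ⟶ T.obj X) (w : T.obj X ⟶ (sTensor S X N)⟦(1 : ℤ)⟧),
    homBound S X N ∧ Triangle.mk (sTensorEv S X N) g w ∈ distinguishedTriangles (C := D)

/-- Elementary moves on (isomorphism classes of) collections of `n` objects of `D`: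
the braid group generators act by mutations, `ℤ^n` acts by objectwise translations, and
isomorphic collections are identified.  The orbit equivalence relation of the
`B_n ⋉ ℤ^n`-action on isomorphism classes of collections is `Relation.EqvGen (Move n)`. -/
inductive Move (n : ℕ) : (Fin n → D) → (Fin n → D) → Prop
  | braid (E : Fin n → D) (i : ℕ) (h : i + 1 < n) (L : D)
      (hL : IsLeftMutation (E ⟨i, by omega⟩) (E ⟨i + 1, h⟩) L) :
      Move n E (fun j => if (j : ℕ) = i then L else if (j : ℕ) = i + 1 then E ⟨i, by omega⟩ else E j)
  | shift (E : Fin n → D) (m : Fin n → ℤ) : Move n E (fun j => (E j)⟦m j⟧)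
  | iso (E E' : Fin n → D) (h : ∀ j, Nonempty (E j ≅ E' j)) : Move n E E'

end Twist

end CHS

namespace CHS

open CategoryTheory Limits Pretriangulated

universe v u

variable {D : Type u} [Category.{v} D] [Preadditive D] [HasZeroObject D] [HasShift D ℤ]
  [∀ n : ℤ, (shiftFunctor D n).Additive] [Pretriangulated D] [Linear ℂ D]
set_option linter.unusedSectionVars false

namespace S6

section ModuleHelpers

variable {V : Type*} [AddCommGroup V] [Module ℂ V]

lemma eq_zero_of_fin0 (e : V ≃ₗ[ℂ] (Fin 0 → ℂ)) (v : V) : v = 0 := by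
  have : e v = e 0 := Subsingleton.elim _ _
  exact e.injective this

lemma zeroEquiv (h : ∀ v : V, v = 0) : Nonempty (V ≃ₗ[ℂ] (Fin 0 → ℂ)) := by
  have : Subsingleton V := ⟨fun x y => by rw [h x, h y]⟩
  exact ⟨{ toFun := fun _ => 0, invFun := fun _ => 0,
           map_add' := fun _ _ => Subsingleton.elim _ _,
           map_smul' := fun _ _ => Subsingleton.elim _ _,
           left_inv := fun x => Subsingleton.elim _ _,
           right_inv := fun x => Subsingleton.elim _ _ }⟩

lemma oneEquiv (v₀ : V) (h0 : v₀ ≠ 0) (hs : ∀ v, ∃ x : ℂ, v = x • v₀) :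
    Nonempty (V ≃ₗ[ℂ] (Fin 1 → ℂ)) := by
  have hli : LinearIndependent ℂ ![v₀] := by
    rw [linearIndependent_unique_iff]
    simpa using h0
  have hsp : ⊤ ≤ Submodule.span ℂ (Set.range ![v₀]) := by
    intro v _
    obtain ⟨x, rfl⟩ := hs v
    exact Submodule.smul_mem _ _ (Submodule.subset_span ⟨0, rfl⟩)
  exact ⟨(Module.Basis.mk hli hsp).equivFun⟩

lemma eq_zero_of_finEq0 {n : ℕ} (hn : n = 0) (e : V ≃ₗ[ℂ] (Fin n → ℂ)) (v : V) : v = 0 := by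
  subst hn; exact eq_zero_of_fin0 e v

lemma nonempty_congr_n {V : Type*} [AddCommGroup V] [Module ℂ V] {n m : ℕ} (h : n = m) :
    Nonempty (V ≃ₗ[ℂ] (Fin m → ℂ)) → Nonempty (V ≃ₗ[ℂ] (Fin n → ℂ)) := by
  subst h; exact id

lemma span_of_fin1 {n : ℕ} (hn : n = 1) (e : V ≃ₗ[ℂ] (Fin n → ℂ)) :
    ∃ v₀ : V, v₀ ≠ 0 ∧ ∀ v, ∃ x : ℂ, v = x • v₀ := by
  subst hn
  refine ⟨e.symm (fun _ => 1), ?_, ?_⟩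
  · intro h
    have : (fun _ => (1:ℂ) : Fin 1 → ℂ) = 0 := by
      have := congrArg e h
      simpa using this
    exact one_ne_zero (congrFun this 0)
  · intro v
    refine ⟨e v 0, ?_⟩
    apply e.injective
    rw [map_smul, e.apply_symm_apply]
    funext i
    fin_cases i
    simp

end ModuleHelpers

section ShiftHelpers

lemma shift_map_zero_iff {X Y : D} (m : ℤ) (f : X ⟶ Y) :
    (shiftFunctor D m).map f = 0 ↔ f = 0 := by
  constructor
  · intro h
    apply (shiftFunctor D m).map_injective
    rw [h, Functor.map_zero]
  · intro h; rw [h, Functor.map_zero]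

/-- vanishing transfer: source and target both shifted -/
lemma vanish_V1 {X Y : D} {q : ℤ} (h : ∀ g : X ⟶ Y⟦q⟧, g = 0) (m p : ℤ) (hpq : q + m = p) :
    ∀ f : X⟦m⟧ ⟶ Y⟦p⟧, f = 0 := by
  intro f
  obtain ⟨g, hg⟩ := (shiftFunctor D m).map_surjective
    (f ≫ (shiftFunctorAdd' D q m p hpq).hom.app Y)
  rw [h g, Functor.map_zero] at hg
  have : f = (f ≫ (shiftFunctorAdd' D q m p hpq).hom.app Y) ≫
      (shiftFunctorAdd' D q m p hpq).inv.app Y := by simp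
  rw [this, ← hg, zero_comp]

/-- vanishing transfer: source shifted, target unshifted -/
lemma vanish_V2 {X Y : D} {q : ℤ} (h : ∀ g : X ⟶ Y⟦q⟧, g = 0) (m : ℤ) (hm : q + m = 0) :
    ∀ f : X⟦m⟧ ⟶ Y, f = 0 := by
  intro f
  obtain ⟨g, hg⟩ := (shiftFunctor D m).map_surjective
    (f ≫ (shiftFunctorCompIsoId D q m hm).inv.app Y)
  rw [h g, Functor.map_zero] at hg
  have : f = (f ≫ (shiftFunctorCompIsoId D q m hm).inv.app Y) ≫
      (shiftFunctorCompIsoId D q m hm).hom.app Y := by simp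
  rw [this, ← hg, zero_comp]

/-- vanishing transfer: from `q = 0` to unshifted target -/
lemma vanish_V3 {X Y : D} (h : ∀ g : X ⟶ Y⟦(0:ℤ)⟧, g = 0) :
    ∀ f : X ⟶ Y, f = 0 := by
  intro f
  have : f = (f ≫ (shiftFunctorZero D ℤ).inv.app Y) ≫ (shiftFunctorZero D ℤ).hom.app Y := by simp
  rw [this, h (f ≫ (shiftFunctorZero D ℤ).inv.app Y), zero_comp]

/-- vanishing transfer: from shifted source to canonical form -/
lemma vanish_V4 {X Y : D} {m : ℤ} (h : ∀ g : X⟦m⟧ ⟶ Y, g = 0) (q : ℤ) (hq : q + m = 0) :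
    ∀ f : X ⟶ Y⟦q⟧, f = 0 := by
  intro f
  have h2 : (shiftFunctor D m).map f ≫ (shiftFunctorCompIsoId D q m hq).hom.app Y = 0 := h _
  have h3 : (shiftFunctor D m).map f = 0 := by
    have : (shiftFunctor D m).map f =
        ((shiftFunctor D m).map f ≫ (shiftFunctorCompIsoId D q m hq).hom.app Y) ≫
          (shiftFunctorCompIsoId D q m hq).inv.app Y := by simp
    rw [this, h2, zero_comp]
  exact ((shift_map_zero_iff m f).mp h3)

/-- span transfer: any map between equally-shifted objects is a shift of a map -/
lemma span_H0 {X Y : D} (m : ℤ) (f : X⟦m⟧ ⟶ Y⟦m⟧) :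
    ∃ g : X ⟶ Y, f = (shiftFunctor D m).map g :=
  ((shiftFunctor D m).map_surjective f).imp (fun _ hg => hg.symm)

/-- span transfer: unshift a once-shifted source -/
lemma span_H1 {X Y : D} (q p : ℤ) (hpq : q + 1 = p) (f : X⟦(1:ℤ)⟧ ⟶ Y⟦p⟧) :
    ∃ g : X ⟶ Y⟦q⟧,
      f = (shiftFunctor D (1:ℤ)).map g ≫ (shiftFunctorAdd' D q 1 p hpq).inv.app Y := by
  obtain ⟨g, hg⟩ := (shiftFunctor D (1:ℤ)).map_surjective
    (f ≫ (shiftFunctorAdd' D q 1 p hpq).hom.app Y)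
  refine ⟨g, ?_⟩
  rw [hg]
  simp


lemma vanish_V3' {X Y : D} (h : ∀ f : X ⟶ Y, f = 0) : ∀ g : X ⟶ Y⟦(0:ℤ)⟧, g = 0 := by
  intro g
  have : g = (g ≫ (shiftFunctorZero D ℤ).hom.app Y) ≫ (shiftFunctorZero D ℤ).inv.app Y := by simp
  rw [this, h (g ≫ (shiftFunctorZero D ℤ).hom.app Y), zero_comp]


/-- `Y⟦1⟧⟦1⟧ ≅ Y⟦2⟧` as functors -/
def sh12 : shiftFunctor D (2:ℤ) ≅ shiftFunctor D (1:ℤ) ⋙ shiftFunctor D (1:ℤ) :=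
  shiftFunctorAdd' D 1 1 2 (by norm_num)

/-- `Y⟦2⟧⟦1⟧ ≅ Y⟦3⟧` as functors -/
def sh23 : shiftFunctor D (3:ℤ) ≅ shiftFunctor D (2:ℤ) ⋙ shiftFunctor D (1:ℤ) :=
  shiftFunctorAdd' D 2 1 3 (by norm_num)

end ShiftHelpers


section Serre

variable (SD : SerreData D)

/-- the Serre pairing viewed as a map to the dual space -/
def pairMap (X Y : D) : (X ⟶ Y) →ₗ[ℂ] Module.Dual ℂ (Y ⟶ SD.S.obj X) where
  toFun f := (SD.trace X).comp (Linear.leftComp ℂ (SD.S.obj X) f)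
  map_add' f f' := by
    ext g
    simp [Preadditive.add_comp]
  map_smul' x f := by
    ext g
    simp [Linear.smul_comp]

@[simp] lemma pairMap_apply (X Y : D) (f : X ⟶ Y) (g : Y ⟶ SD.S.obj X) :
    pairMap SD X Y f g = SD.trace X (f ≫ g) := rfl

lemma pairMap_bijective (X Y : D) : Function.Bijective (pairMap SD X Y) := by
  constructor
  · rw [injective_iff_map_eq_zero]
    intro f hf
    by_contra hf0
    obtain ⟨g, hg⟩ := SD.nondeg f hf0
    exact hg (by simpa using congrFun (congrArg DFunLike.coe hf) g)
  · intro φ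
    obtain ⟨f, hf⟩ := SD.perfect φ
    exact ⟨f, by ext g; simp [hf g]⟩

/-- the Serre pairing equivalence `Hom(X,Y) ≅ Hom(Y, S X)^*` -/
noncomputable def pairEquiv (X Y : D) : (X ⟶ Y) ≃ₗ[ℂ] Module.Dual ℂ (Y ⟶ SD.S.obj X) :=
  LinearEquiv.ofBijective _ (pairMap_bijective SD X Y)

@[simp] lemma pairEquiv_apply (X Y : D) (f : X ⟶ Y) (g : Y ⟶ SD.S.obj X) :
    pairEquiv SD X Y f g = SD.trace X (f ≫ g) := rfl

lemma S_ker {X Y : D} (k : Y ⟶ X) (h : ∀ u : X ⟶ SD.S.obj Y, SD.trace Y (k ≫ u) = 0) :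
    k = 0 := by
  by_contra hk
  obtain ⟨g, hg⟩ := SD.nondeg k hk
  exact hg (h g)

lemma S_map_smul {X Y : D} (x : ℂ) (h : Y ⟶ X) :
    SD.S.map (x • h) = x • SD.S.map h := by
  haveI := SD.isEquivalence
  obtain ⟨k, hk⟩ := SD.S.map_surjective (x • SD.S.map h)
  have hkxh : k = x • h := by
    have hz : ∀ u : X ⟶ SD.S.obj Y, SD.trace Y ((k - x • h) ≫ u) = 0 := by
      intro u
      rw [Preadditive.sub_comp, map_sub, SD.comm k u, hk, Linear.comp_smul, map_smul,
        Linear.smul_comp, map_smul, ← SD.comm h u, sub_self]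
    have := S_ker SD (k - x • h) hz
    rwa [sub_eq_zero] at this
  rw [← hk, hkxh]

lemma S_map_add {X Y : D} (h h' : Y ⟶ X) :
    SD.S.map (h + h') = SD.S.map h + SD.S.map h' := by
  haveI := SD.isEquivalence
  obtain ⟨k, hk⟩ := SD.S.map_surjective (SD.S.map h + SD.S.map h')
  have hkxh : k = h + h' := by
    have hz : ∀ u : X ⟶ SD.S.obj Y, SD.trace Y ((k - (h + h')) ≫ u) = 0 := by
      intro u
      rw [Preadditive.sub_comp, map_sub, SD.comm k u, hk, Preadditive.comp_add, map_add,
        Preadditive.add_comp, map_add, ← SD.comm h u, ← SD.comm h' u, sub_self]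
    have := S_ker SD (k - (h + h')) hz
    rwa [sub_eq_zero] at this
  rw [← hk, hkxh]

/-- `S` induces a `ℂ`-linear equivalence on `Hom`-spaces -/
noncomputable def SHomEquiv (X Y : D) : (X ⟶ Y) ≃ₗ[ℂ] (SD.S.obj X ⟶ SD.S.obj Y) := by
  haveI := SD.isEquivalence
  exact LinearEquiv.ofBijective
    { toFun := fun f => SD.S.map f
      map_add' := fun f f' => S_map_add SD f f'
      map_smul' := fun x f => S_map_smul SD x f }
    ⟨fun f g h => SD.S.map_injective h, fun g => SD.S.map_surjective g⟩

include SD in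
/-- Every Hom-space of a category with Serre data is finite-dimensional. -/
theorem homFinite (X Y : D) : FiniteDimensional ℂ (X ⟶ Y) := by
  set W := (X ⟶ Y)
  set W₁ := (Y ⟶ SD.S.obj X)
  have e1 : W ≃ₗ[ℂ] Module.Dual ℂ W₁ := pairEquiv SD X Y
  have e2 : W₁ ≃ₗ[ℂ] Module.Dual ℂ W :=
    (pairEquiv SD Y (SD.S.obj X)).trans (SHomEquiv SD X Y).dualMap
  have e : (W × W₁) ≃ₗ[ℂ] Module.Dual ℂ (W × W₁) :=
    ((LinearEquiv.prodCongr e1 e2).trans (Module.dualProdDualEquivDual ℂ W₁ W)).trans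
      (LinearEquiv.prodComm ℂ W W₁).dualMap
  have hfin : FiniteDimensional ℂ (W × W₁) :=
    Basis.linearEquiv_dual_iff_finiteDimensional.mp ⟨e⟩
  exact Module.Finite.of_surjective (LinearMap.fst ℂ W W₁) LinearMap.fst_surjective

/-- if `Hom(X, Y) = 0` then `Hom(Y, S X) = 0` -/
lemma serre_vanish {X Y : D} (h : ∀ f : X ⟶ Y, f = 0) : ∀ g : Y ⟶ SD.S.obj X, g = 0 := by
  intro g
  rw [← Module.forall_dual_apply_eq_zero_iff ℂ g]
  intro φ
  obtain ⟨f, hf⟩ := (pairMap_bijective SD X Y).2 φ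
  rw [← hf]
  simp [h f]

end Serre


section Ctx

structure Ctx (D : Type u) [Category.{v} D] [Preadditive D] [HasZeroObject D] [HasShift D ℤ]
    [∀ n : ℤ, (shiftFunctor D n).Additive] [Pretriangulated D] [Linear ℂ D] where
  P : ℕ → D
  a : ∀ i : ℕ, P (i + 1) ⟶ P i
  b : ∀ i : ℕ, P (i + 1) ⟶ P i
  hab : ∀ i, a (i + 1) ≫ b i = 0
  hba : ∀ i, b (i + 1) ≫ a i = 0
  hdims : ∀ i j : ℕ, 1 ≤ i → i ≤ 4 → 1 ≤ j → j ≤ 4 →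
      homsAre (P i) (P j)
        (fun p => if p = 0 then (if i = j then 1 else if j < i then 2 else 0) else 0)
  hbasis : ∀ j k : ℕ, 1 ≤ j → 1 ≤ k → j + k ≤ 4 →
      ∃ B : Module.Basis (Fin 2) ℂ (P (j + k) ⟶ P j),
        B 0 = pathComp P a j k ∧ B 1 = pathComp P b j k
  Sp : D
  TD : TotData (P 4) (P 3) (P 2) (P 1) Sp (b 3) (a 2) (b 1)

namespace Ctx

variable (C : Ctx D)

abbrev K₁ : D := C.TD.K₁
abbrev K₂ : D := C.TD.K₂
abbrev ι₁ : C.P 3 ⟶ C.K₁ := C.TD.ι₁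
abbrev δ₁ : C.K₁ ⟶ (C.P 4)⟦(1:ℤ)⟧ := C.TD.δ₁
abbrev v₁ : C.K₁ ⟶ C.P 2 := C.TD.v₁
abbrev ι₂ : C.P 2 ⟶ C.K₂ := C.TD.ι₂
abbrev δ₂ : C.K₂ ⟶ C.K₁⟦(1:ℤ)⟧ := C.TD.δ₂
abbrev v₂ : C.K₂ ⟶ C.P 1 := C.TD.v₂
abbrev ι₃ : C.P 1 ⟶ C.Sp := C.TD.ι₃
abbrev δ₃ : C.Sp ⟶ C.K₂⟦(1:ℤ)⟧ := C.TD.δ₃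

abbrev T1 : Triangle D := ⟨_, _, _, (C.b 3), C.ι₁, C.δ₁⟩
abbrev T2 : Triangle D := ⟨_, _, _, C.v₁, C.ι₂, C.δ₂⟩
abbrev T3 : Triangle D := ⟨_, _, _, C.v₂, C.ι₃, C.δ₃⟩

lemma hT1 : C.T1 ∈ distinguishedTriangles (C := D) := C.TD.tri₁
lemma hT2 : C.T2 ∈ distinguishedTriangles (C := D) := C.TD.tri₂
lemma hT3 : C.T3 ∈ distinguishedTriangles (C := D) := C.TD.tri₃

/-- the pure `α`-path and pure `β`-path -/
abbrev ap (j k : ℕ) : C.P (j + k) ⟶ C.P j := pathComp C.P C.a j k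
abbrev bp (j k : ℕ) : C.P (j + k) ⟶ C.P j := pathComp C.P C.b j k

lemma base_vanish {i j : ℕ} (h1 : 1 ≤ i) (h4 : i ≤ 4) (h1' : 1 ≤ j) (h4' : j ≤ 4)
    {p : ℤ} (h : p ≠ 0 ∨ i < j) : ∀ f : C.P i ⟶ (C.P j)⟦p⟧, f = 0 := by
  obtain ⟨e⟩ := C.hdims i j h1 h4 h1' h4' p
  have h0 : (if p = 0 then (if i = j then 1 else if j < i then 2 else 0) else 0) = 0 := by
    rcases h with h | h
    · simp [h]
    · split_ifs <;> omega
  exact eq_zero_of_finEq0 h0 e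

lemma base_vanish' {i j : ℕ} (h1 : 1 ≤ i) (h4 : i ≤ 4) (h : i < j) (h4' : j ≤ 4) :
    ∀ f : C.P i ⟶ C.P j, f = 0 :=
  vanish_V3 (C.base_vanish h1 h4 (by omega) h4' (Or.inr h))

lemma endo_span {i : ℕ} (h1 : 1 ≤ i) (h4 : i ≤ 4) :
    ∀ f : C.P i ⟶ C.P i, ∃ x : ℂ, f = x • 𝟙 (C.P i) := by
  obtain ⟨e⟩ := C.hdims i i h1 h4 h1 h4 0
  obtain ⟨g₀, hg₀, hspan⟩ := span_of_fin1 (by norm_num) e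
  intro f
  have hε : (shiftFunctorZero D ℤ).inv.app (C.P i) ≫ (shiftFunctorZero D ℤ).hom.app (C.P i) =
      𝟙 (C.P i) := (shiftFunctorZero D ℤ).inv_hom_id_app (C.P i)
  obtain ⟨x, hx⟩ := hspan (f ≫ (shiftFunctorZero D ℤ).inv.app (C.P i))
  obtain ⟨y, hy⟩ := hspan (𝟙 (C.P i) ≫ (shiftFunctorZero D ℤ).inv.app (C.P i))
  by_cases hy0 : y = 0
  · -- then 𝟙 = 0 and everything is 0
    rw [hy0, zero_smul] at hy
    have h1 : 𝟙 (C.P i) = 0 := by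
      have := congrArg (fun t => t ≫ (shiftFunctorZero D ℤ).hom.app (C.P i)) hy
      simpa [hε] using this
    refine ⟨0, ?_⟩
    rw [zero_smul, ← Category.id_comp f, h1, zero_comp]
  · refine ⟨x / y, ?_⟩
    have hf : f = x • (g₀ ≫ (shiftFunctorZero D ℤ).hom.app (C.P i)) := by
      have := congrArg (fun t => t ≫ (shiftFunctorZero D ℤ).hom.app (C.P i)) hx
      simpa [Linear.smul_comp, hε] using this
    have hid : 𝟙 (C.P i) = y • (g₀ ≫ (shiftFunctorZero D ℤ).hom.app (C.P i)) := by
      have := congrArg (fun t => t ≫ (shiftFunctorZero D ℤ).hom.app (C.P i)) hy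
      simpa [Linear.smul_comp, hε] using this
    rw [hf, hid, smul_smul]
    congr 1
    field_simp

lemma pp_span {j k : ℕ} (h1 : 1 ≤ j) (hk : 1 ≤ k) (h4 : j + k ≤ 4) :
    ∀ f : C.P (j + k) ⟶ C.P j, ∃ x y : ℂ, f = x • C.ap j k + y • C.bp j k := by
  obtain ⟨B, hB0, hB1⟩ := C.hbasis j k h1 hk h4
  intro f
  refine ⟨B.repr f 0, B.repr f 1, ?_⟩
  have := B.sum_repr f
  rw [Fin.sum_univ_two, hB0, hB1] at this
  exact this.symm

lemma pp_indep {j k : ℕ} (h1 : 1 ≤ j) (hk : 1 ≤ k) (h4 : j + k ≤ 4)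
    {x y : ℂ} (h : x • C.ap j k + y • C.bp j k = 0) : x = 0 ∧ y = 0 := by
  obtain ⟨B, hB0, hB1⟩ := C.hbasis j k h1 hk h4
  rw [show C.ap j k = B 0 from hB0.symm, show C.bp j k = B 1 from hB1.symm] at h
  have h' := congrArg B.repr h
  rw [map_add, map_smul, map_smul, B.repr_self, B.repr_self, map_zero] at h'
  constructor
  · have := congrArg (fun t => t 0) h'
    simpa using this
  · have := congrArg (fun t => t 1) h'
    simpa using this

lemma ap_ne_zero {j k : ℕ} (h1 : 1 ≤ j) (hk : 1 ≤ k) (h4 : j + k ≤ 4) : C.ap j k ≠ 0 := by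
  intro h
  have := C.pp_indep h1 hk h4 (x := 1) (y := 0) (by rw [h]; simp)
  exact one_ne_zero this.1

lemma bp_ne_zero {j k : ℕ} (h1 : 1 ≤ j) (hk : 1 ≤ k) (h4 : j + k ≤ 4) : C.bp j k ≠ 0 := by
  intro h
  have := C.pp_indep h1 hk h4 (x := 0) (y := 1) (by rw [h]; simp)
  exact one_ne_zero this.2

end Ctx

end Ctx


end S6



namespace S6

section StageA

namespace Ctx

variable (C : Ctx D)

/- basic composition facts -/
lemma v₂ι₃ : C.v₂ ≫ C.ι₃ = 0 := comp_distTriang_mor_zero₁₂ _ C.hT3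
lemma v₁ι₂ : C.v₁ ≫ C.ι₂ = 0 := comp_distTriang_mor_zero₁₂ _ C.hT2
lemma b3ι₁ : C.b 3 ≫ C.ι₁ = 0 := comp_distTriang_mor_zero₁₂ _ C.hT1
lemma ι₃δ₃ : C.ι₃ ≫ C.δ₃ = 0 := comp_distTriang_mor_zero₂₃ _ C.hT3
lemma ι₂δ₂ : C.ι₂ ≫ C.δ₂ = 0 := comp_distTriang_mor_zero₂₃ _ C.hT2
lemma ι₁δ₁ : C.ι₁ ≫ C.δ₁ = 0 := comp_distTriang_mor_zero₂₃ _ C.hT1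
lemma δ₃v₂ : C.δ₃ ≫ (shiftFunctor D (1:ℤ)).map C.v₂ = 0 := comp_distTriang_mor_zero₃₁ _ C.hT3
lemma δ₂v₁ : C.δ₂ ≫ (shiftFunctor D (1:ℤ)).map C.v₁ = 0 := comp_distTriang_mor_zero₃₁ _ C.hT2
lemma δ₁b3 : C.δ₁ ≫ (shiftFunctor D (1:ℤ)).map (C.b 3) = 0 := comp_distTriang_mor_zero₃₁ _ C.hT1

lemma b1ι₃ : C.b 1 ≫ C.ι₃ = 0 := by
  rw [← C.TD.fac₂, Category.assoc]
  have h := C.v₂ι₃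
  change C.TD.ι₂ ≫ C.TD.v₂ ≫ C.TD.ι₃ = 0
  rw [h, comp_zero]

lemma a2ι₂ : C.a 2 ≫ C.ι₂ = 0 := by
  rw [← C.TD.fac₁, Category.assoc]
  have h := C.v₁ι₂
  change C.TD.ι₁ ≫ C.TD.v₁ ≫ C.TD.ι₂ = 0
  rw [h, comp_zero]

lemma a2_ne : C.a 2 ≠ 0 := by
  have := C.ap_ne_zero (j := 2) (k := 1) (by omega) (by omega) (by omega)
  simpa [pathComp] using this

lemma b1_ne : C.b 1 ≠ 0 := by
  have := C.bp_ne_zero (j := 1) (k := 1) (by omega) (by omega) (by omega)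
  simpa [pathComp] using this

lemma b3_ne : C.b 3 ≠ 0 := by
  have := C.bp_ne_zero (j := 3) (k := 1) (by omega) (by omega) (by omega)
  simpa [pathComp] using this

/-- `Hom(P i ⟦m⟧, K₁) = 0` for `m ≠ 0` -/
lemma PK₁_shifted {i : ℕ} (h1 : 1 ≤ i) (h4 : i ≤ 4) {m : ℤ} (hm : m ≠ 0) :
    ∀ g : (C.P i)⟦m⟧ ⟶ C.K₁, g = 0 := by
  intro g
  have h5 : g ≫ C.δ₁ = 0 := by
    by_cases hm1 : m = 1
    · subst hm1
      obtain ⟨h', hh⟩ := span_H0 (1:ℤ) (g ≫ C.δ₁)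
      have hcomp : h' ≫ C.b 3 = 0 := by
        rw [← shift_map_zero_iff (1:ℤ), Functor.map_comp]
        rw [← hh, Category.assoc, C.δ₁b3, comp_zero]
      have h'0 : h' = 0 := by
        rcases Nat.lt_or_ge i 4 with hi | hi
        · exact C.base_vanish' h1 h4 hi (by omega) h'
        · have hi4 : i = 4 := by omega
          subst hi4
          obtain ⟨x, hx⟩ := C.endo_span (i := 4) (by omega) (by omega) h'
          rw [hx, Linear.smul_comp, Category.id_comp] at hcomp
          rcases smul_eq_zero.mp hcomp with h | h
          · rw [hx, h, zero_smul]
          · exact absurd h C.b3_ne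
      rw [hh, h'0, Functor.map_zero]
    · exact vanish_V1 (C.base_vanish h1 h4 (by omega) (by omega)
        (Or.inl (by omega : (1 : ℤ) - m ≠ 0))) m 1 (by ring) _
  obtain ⟨w, hw⟩ := Triangle.coyoneda_exact₃ _ C.hT1 g h5
  have hw0 : w = 0 :=
    vanish_V2 (C.base_vanish h1 h4 (by omega) (by omega) (Or.inl (by omega : -m ≠ 0)))
      m (by ring) w
  rw [hw, hw0, zero_comp]

/-- `Hom(P i, K₁⟦q⟧) = 0` for `q ≠ 0` -/
lemma PK₁_vanish {i : ℕ} (h1 : 1 ≤ i) (h4 : i ≤ 4) {q : ℤ} (hq : q ≠ 0) :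
    ∀ f : C.P i ⟶ C.K₁⟦q⟧, f = 0 :=
  vanish_V4 (C.PK₁_shifted h1 h4 (m := -q) (by omega)) q (by ring)

/-- maps `P i ⟶ K₁` killed by `v₁` vanish -/
lemma PK₁_ker {i : ℕ} (h1 : 1 ≤ i) (h4 : i ≤ 4) :
    ∀ h' : C.P i ⟶ C.K₁, h' ≫ C.v₁ = 0 → h' = 0 := by
  intro h' hker
  have h5 : h' ≫ C.δ₁ = 0 :=
    C.base_vanish h1 h4 (by omega) (by omega) (Or.inl (by omega : (1:ℤ) ≠ 0)) _
  obtain ⟨w, hw0⟩ := Triangle.coyoneda_exact₃ _ C.hT1 h' h5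
  have hfac : C.ι₁ ≫ C.v₁ = C.a 2 := C.TD.fac₁
  interval_cases i
  · have hw : h' = w ≫ C.ι₁ := hw0
    rw [hw, C.base_vanish' (by omega) (by omega) (by omega) (by omega) w, zero_comp]
  · have hw : h' = w ≫ C.ι₁ := hw0
    rw [hw, C.base_vanish' (by omega) (by omega) (by omega) (by omega) w, zero_comp]
  · have hw : h' = w ≫ C.ι₁ := hw0
    obtain ⟨x, hx⟩ := C.endo_span (i := 3) (by omega) (by omega) w
    replace hw : h' = x • C.ι₁ := by
      rw [hw, hx, Linear.smul_comp, Category.id_comp]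
    rw [hw, Linear.smul_comp, hfac] at hker
    rcases smul_eq_zero.mp hker with h | h
    · rw [hw, h, zero_smul]
    · exact absurd h C.a2_ne
  · have hw : h' = w ≫ C.ι₁ := hw0
    obtain ⟨x, y, hxy⟩ := C.pp_span (j := 3) (k := 1) (by omega) (by omega) (by omega) w
    have hb : C.bp 3 1 ≫ C.ι₁ = 0 := by
      have hbb : C.bp 3 1 = C.b 3 := by simp [pathComp]
      rw [hbb, C.b3ι₁]
    replace hw : h' = x • (C.ap 3 1 ≫ C.ι₁) := by
      rw [hw, hxy, Preadditive.add_comp, Linear.smul_comp, Linear.smul_comp, hb, smul_zero,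
        add_zero]
    rw [hw, Linear.smul_comp, Category.assoc, hfac] at hker
    have hap : C.ap 3 1 ≫ C.a 2 ≠ 0 := by
      have h22 := C.ap_ne_zero (j := 2) (k := 2) (by omega) (by omega) (by omega)
      intro hc
      apply h22
      have e1 : C.ap 2 2 = C.a 3 ≫ C.a 2 := by simp [pathComp]
      have e2 : C.ap 3 1 = C.a 3 := by simp [pathComp]
      rw [e1, ← e2, hc]
    rcases smul_eq_zero.mp hker with h | h
    · rw [hw, h, zero_smul]
    · exact absurd h hap


/-- `Hom(P i ⟦m⟧, K₂) = 0` for `m ≠ 0` -/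
lemma PK₂_shifted {i : ℕ} (h1 : 1 ≤ i) (h4 : i ≤ 4) {m : ℤ} (hm : m ≠ 0) :
    ∀ g : (C.P i)⟦m⟧ ⟶ C.K₂, g = 0 := by
  intro g
  have h5 : g ≫ C.δ₂ = 0 := by
    by_cases hm1 : m = 1
    · subst hm1
      obtain ⟨h', hh⟩ := span_H0 (1:ℤ) (g ≫ C.δ₂)
      have hcomp : h' ≫ C.v₁ = 0 := by
        rw [← shift_map_zero_iff (1:ℤ), Functor.map_comp, ← hh, Category.assoc, C.δ₂v₁,
          comp_zero]
      rw [hh, C.PK₁_ker h1 h4 h' hcomp, Functor.map_zero]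
    · exact vanish_V1 (C.PK₁_vanish h1 h4 (q := 1 - m) (by omega)) m 1 (by ring) _
  obtain ⟨w, hw⟩ := Triangle.coyoneda_exact₃ _ C.hT2 g h5
  have hw0 : w = 0 :=
    vanish_V2 (C.base_vanish h1 h4 (by omega) (by omega) (Or.inl (by omega : -m ≠ 0)))
      m (by ring) w
  rw [hw, hw0, zero_comp]

/-- `Hom(P i, K₂⟦q⟧) = 0` for `q ≠ 0` -/
lemma PK₂_vanish {i : ℕ} (h1 : 1 ≤ i) (h4 : i ≤ 4) {q : ℤ} (hq : q ≠ 0) :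
    ∀ f : C.P i ⟶ C.K₂⟦q⟧, f = 0 :=
  vanish_V4 (C.PK₂_shifted h1 h4 (m := -q) (by omega)) q (by ring)

/-- generators of `Hom(P i, K₂)` -/
def k2g : (i : ℕ) → (C.P i ⟶ C.K₂)
  | 2 => C.ι₂
  | 3 => C.b 2 ≫ C.ι₂
  | 4 => C.b 3 ≫ C.b 2 ≫ C.ι₂
  | _ => 0

@[simp] lemma k2g_one : C.k2g 1 = 0 := rfl
@[simp] lemma k2g_two : C.k2g 2 = C.ι₂ := rfl
@[simp] lemma k2g_three : C.k2g 3 = C.b 2 ≫ C.ι₂ := rfl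
@[simp] lemma k2g_four : C.k2g 4 = C.b 3 ≫ C.b 2 ≫ C.ι₂ := rfl

lemma PK₂_span {i : ℕ} (h1 : 1 ≤ i) (h4 : i ≤ 4) :
    ∀ f : C.P i ⟶ C.K₂, ∃ y : ℂ, f = y • C.k2g i := by
  intro f
  have h5 : f ≫ C.δ₂ = 0 := C.PK₁_vanish h1 h4 (q := 1) (by omega) _
  obtain ⟨w, hw0⟩ := Triangle.coyoneda_exact₃ _ C.hT2 f h5
  interval_cases i
  · have hw : f = w ≫ C.ι₂ := hw0
    refine ⟨0, ?_⟩
    rw [hw, C.base_vanish' (by omega) (by omega) (by omega) (by omega) w, zero_comp, zero_smul]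
  · have hw : f = w ≫ C.ι₂ := hw0
    obtain ⟨x, hx⟩ := C.endo_span (i := 2) (by omega) (by omega) w
    refine ⟨x, ?_⟩
    rw [hw, hx, Linear.smul_comp, Category.id_comp, k2g_two]
  · have hw : f = w ≫ C.ι₂ := hw0
    obtain ⟨x, y, hxy⟩ := C.pp_span (j := 2) (k := 1) (by omega) (by omega) (by omega) w
    have e1 : C.ap 2 1 = C.a 2 := by simp [pathComp]
    have e2 : C.bp 2 1 = C.b 2 := by simp [pathComp]
    refine ⟨y, ?_⟩
    rw [hw, hxy, e1, e2, Preadditive.add_comp, Linear.smul_comp, Linear.smul_comp, C.a2ι₂,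
      smul_zero, zero_add, k2g_three]
  · have hw : f = w ≫ C.ι₂ := hw0
    obtain ⟨x, y, hxy⟩ := C.pp_span (j := 2) (k := 2) (by omega) (by omega) (by omega) w
    have e1 : C.ap 2 2 = C.a 3 ≫ C.a 2 := by simp [pathComp]
    have e2 : C.bp 2 2 = C.b 3 ≫ C.b 2 := by simp [pathComp]
    refine ⟨y, ?_⟩
    rw [hw, hxy, e1, e2, Preadditive.add_comp, Linear.smul_comp, Linear.smul_comp,
      Category.assoc, C.a2ι₂, comp_zero, smul_zero, zero_add, k2g_four, Category.assoc]

lemma PK₂_ker {i : ℕ} (h1 : 1 ≤ i) (h4 : i ≤ 4) :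
    ∀ f : C.P i ⟶ C.K₂, f ≫ C.v₂ = 0 → f = 0 := by
  intro f hker
  obtain ⟨y, hy⟩ := C.PK₂_span h1 h4 f
  have hfac : C.ι₂ ≫ C.v₂ = C.b 1 := C.TD.fac₂
  interval_cases i
  · rw [hy, k2g_one, smul_zero]
  · rw [hy, k2g_two, Linear.smul_comp, hfac] at hker
    rcases smul_eq_zero.mp hker with h | h
    · rw [hy, h, zero_smul]
    · exact absurd h C.b1_ne
  · rw [hy, k2g_three, Linear.smul_comp, Category.assoc, hfac] at hker
    have hne : C.b 2 ≫ C.b 1 ≠ 0 := by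
      have := C.bp_ne_zero (j := 1) (k := 2) (by omega) (by omega) (by omega)
      simpa [pathComp] using this
    rcases smul_eq_zero.mp hker with h | h
    · rw [hy, h, zero_smul]
    · exact absurd h hne
  · rw [hy, k2g_four, Linear.smul_comp, Category.assoc, Category.assoc, hfac] at hker
    have hne : C.b 3 ≫ C.b 2 ≫ C.b 1 ≠ 0 := by
      have := C.bp_ne_zero (j := 1) (k := 3) (by omega) (by omega) (by omega)
      simpa [pathComp] using this
    rcases smul_eq_zero.mp hker with h | h
    · rw [hy, h, zero_smul]
    · exact absurd h hne

/-- `Hom(P i ⟦m⟧, Sp) = 0` for `m ≠ 0` -/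
lemma PSp_shifted {i : ℕ} (h1 : 1 ≤ i) (h4 : i ≤ 4) {m : ℤ} (hm : m ≠ 0) :
    ∀ g : (C.P i)⟦m⟧ ⟶ C.Sp, g = 0 := by
  intro g
  have h5 : g ≫ C.δ₃ = 0 := by
    by_cases hm1 : m = 1
    · subst hm1
      obtain ⟨h', hh⟩ := span_H0 (1:ℤ) (g ≫ C.δ₃)
      have hcomp : h' ≫ C.v₂ = 0 := by
        rw [← shift_map_zero_iff (1:ℤ), Functor.map_comp, ← hh, Category.assoc, C.δ₃v₂,
          comp_zero]
      rw [hh, C.PK₂_ker h1 h4 h' hcomp, Functor.map_zero]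
    · exact vanish_V1 (C.PK₂_vanish h1 h4 (q := 1 - m) (by omega)) m 1 (by ring) _
  obtain ⟨w, hw⟩ := Triangle.coyoneda_exact₃ _ C.hT3 g h5
  have hw0 : w = 0 :=
    vanish_V2 (C.base_vanish h1 h4 (by omega) (by omega) (Or.inl (by omega : -m ≠ 0)))
      m (by ring) w
  rw [hw, hw0, zero_comp]

/-- `Hom(P i, Sp⟦q⟧) = 0` for `q ≠ 0` -/
lemma PSp_vanish {i : ℕ} (h1 : 1 ≤ i) (h4 : i ≤ 4) {q : ℤ} (hq : q ≠ 0) :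
    ∀ f : C.P i ⟶ C.Sp⟦q⟧, f = 0 :=
  vanish_V4 (C.PSp_shifted h1 h4 (m := -q) (by omega)) q (by ring)

/-- generators of `Hom(P i, Sp)` -/
def gen : (i : ℕ) → (C.P i ⟶ C.Sp)
  | 1 => C.ι₃
  | 2 => C.a 1 ≫ C.ι₃
  | 3 => C.a 2 ≫ C.a 1 ≫ C.ι₃
  | 4 => C.a 3 ≫ C.a 2 ≫ C.a 1 ≫ C.ι₃
  | _ => 0

@[simp] lemma gen_one : C.gen 1 = C.ι₃ := rfl
@[simp] lemma gen_two : C.gen 2 = C.a 1 ≫ C.ι₃ := rfl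
@[simp] lemma gen_three : C.gen 3 = C.a 2 ≫ C.a 1 ≫ C.ι₃ := rfl
@[simp] lemma gen_four : C.gen 4 = C.a 3 ≫ C.a 2 ≫ C.a 1 ≫ C.ι₃ := rfl

lemma PSp_span {i : ℕ} (h1 : 1 ≤ i) (h4 : i ≤ 4) :
    ∀ f : C.P i ⟶ C.Sp, ∃ x : ℂ, f = x • C.gen i := by
  intro f
  have h5 : f ≫ C.δ₃ = 0 := C.PK₂_vanish h1 h4 (q := 1) (by omega) _
  obtain ⟨w, hw0⟩ := Triangle.coyoneda_exact₃ _ C.hT3 f h5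
  interval_cases i
  · have hw : f = w ≫ C.ι₃ := hw0
    obtain ⟨x, hx⟩ := C.endo_span (i := 1) (by omega) (by omega) w
    refine ⟨x, ?_⟩
    rw [hw, hx, Linear.smul_comp, Category.id_comp, gen_one]
  · have hw : f = w ≫ C.ι₃ := hw0
    obtain ⟨x, y, hxy⟩ := C.pp_span (j := 1) (k := 1) (by omega) (by omega) (by omega) w
    have e1 : C.ap 1 1 = C.a 1 := by simp [pathComp]
    have e2 : C.bp 1 1 = C.b 1 := by simp [pathComp]
    refine ⟨x, ?_⟩
    rw [hw, hxy, e1, e2, Preadditive.add_comp, Linear.smul_comp, Linear.smul_comp, C.b1ι₃,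
      smul_zero, add_zero, gen_two]
  · have hw : f = w ≫ C.ι₃ := hw0
    obtain ⟨x, y, hxy⟩ := C.pp_span (j := 1) (k := 2) (by omega) (by omega) (by omega) w
    have e1 : C.ap 1 2 = C.a 2 ≫ C.a 1 := by simp [pathComp]
    have e2 : C.bp 1 2 = C.b 2 ≫ C.b 1 := by simp [pathComp]
    refine ⟨x, ?_⟩
    rw [hw, hxy, e1, e2]
    simp [Preadditive.add_comp, Linear.smul_comp, Category.assoc, C.b1ι₃]
  · have hw : f = w ≫ C.ι₃ := hw0
    obtain ⟨x, y, hxy⟩ := C.pp_span (j := 1) (k := 3) (by omega) (by omega) (by omega) w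
    have e1 : C.ap 1 3 = C.a 3 ≫ C.a 2 ≫ C.a 1 := by simp [pathComp]
    have e2 : C.bp 1 3 = C.b 3 ≫ C.b 2 ≫ C.b 1 := by simp [pathComp]
    refine ⟨x, ?_⟩
    rw [hw, hxy, e1, e2]
    simp [Preadditive.add_comp, Linear.smul_comp, Category.assoc, C.b1ι₃]

lemma gen_ne {i : ℕ} (h1 : 1 ≤ i) (h4 : i ≤ 4) : C.gen i ≠ 0 := by
  have hfac : C.ι₂ ≫ C.v₂ = C.b 1 := C.TD.fac₂
  intro hg
  interval_cases i
  · -- gen 1 = ι₃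
    rw [gen_one] at hg
    have h5 : 𝟙 (C.P 1) ≫ C.ι₃ = 0 := by rw [Category.id_comp, hg]
    obtain ⟨ψ, hψ0⟩ := Triangle.coyoneda_exact₂ _ C.hT3 (𝟙 (C.P 1)) h5
    have hψ : 𝟙 (C.P 1) = ψ ≫ C.v₂ := hψ0
    obtain ⟨y, hy⟩ := C.PK₂_span (by omega) (by omega) ψ
    rw [hy, k2g_one, smul_zero, zero_comp] at hψ
    have : C.b 1 = 0 := by
      rw [← Category.comp_id (C.b 1), hψ, comp_zero]
    exact C.b1_ne this
  · rw [gen_two] at hg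
    obtain ⟨ψ, hψ0⟩ := Triangle.coyoneda_exact₂ _ C.hT3 (C.a 1) hg
    have hψ : C.a 1 = ψ ≫ C.v₂ := hψ0
    obtain ⟨y, hy⟩ := C.PK₂_span (by omega) (by omega) ψ
    rw [hy, k2g_two, Linear.smul_comp, hfac] at hψ
    have hcomb : (1:ℂ) • C.ap 1 1 + (-y) • C.bp 1 1 = 0 := by
      have e1 : C.ap 1 1 = C.a 1 := by simp [pathComp]
      have e2 : C.bp 1 1 = C.b 1 := by simp [pathComp]
      rw [e1, e2, one_smul, hψ, neg_smul]
      abel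
    exact one_ne_zero (C.pp_indep (by omega) (by omega) (by omega) hcomb).1
  · rw [gen_three] at hg
    have hg' : (C.a 2 ≫ C.a 1) ≫ C.ι₃ = 0 := by rw [Category.assoc, hg]
    obtain ⟨ψ, hψ0⟩ := Triangle.coyoneda_exact₂ _ C.hT3 (C.a 2 ≫ C.a 1) hg'
    have hψ : C.a 2 ≫ C.a 1 = ψ ≫ C.v₂ := hψ0
    obtain ⟨y, hy⟩ := C.PK₂_span (by omega) (by omega) ψ
    rw [hy, k2g_three, Linear.smul_comp, Category.assoc, hfac] at hψ
    have hcomb : (1:ℂ) • C.ap 1 2 + (-y) • C.bp 1 2 = 0 := by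
      have e1 : C.ap 1 2 = C.a 2 ≫ C.a 1 := by simp [pathComp]
      have e2 : C.bp 1 2 = C.b 2 ≫ C.b 1 := by simp [pathComp]
      rw [e1, e2, one_smul, hψ, neg_smul]
      abel
    exact one_ne_zero (C.pp_indep (by omega) (by omega) (by omega) hcomb).1
  · rw [gen_four] at hg
    have hg' : (C.a 3 ≫ C.a 2 ≫ C.a 1) ≫ C.ι₃ = 0 := by
      simpa [Category.assoc] using hg
    obtain ⟨ψ, hψ0⟩ := Triangle.coyoneda_exact₂ _ C.hT3 (C.a 3 ≫ C.a 2 ≫ C.a 1) hg'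
    have hψ : C.a 3 ≫ C.a 2 ≫ C.a 1 = ψ ≫ C.v₂ := hψ0
    obtain ⟨y, hy⟩ := C.PK₂_span (by omega) (by omega) ψ
    rw [hy, k2g_four, Linear.smul_comp, Category.assoc, Category.assoc, hfac] at hψ
    have hcomb : (1:ℂ) • C.ap 1 3 + (-y) • C.bp 1 3 = 0 := by
      have e1 : C.ap 1 3 = C.a 3 ≫ C.a 2 ≫ C.a 1 := by simp [pathComp]
      have e2 : C.bp 1 3 = C.b 3 ≫ C.b 2 ≫ C.b 1 := by simp [pathComp]
      rw [e1, e2, one_smul, hψ, neg_smul]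
      abel
    exact one_ne_zero (C.pp_indep (by omega) (by omega) (by omega) hcomb).1


/- ## Stage B : contravariant computations -/

lemma v₂_ne : C.v₂ ≠ 0 := by
  intro h
  apply C.b1_ne
  rw [← C.TD.fac₂]
  have h' : C.TD.v₂ = 0 := h
  rw [h', comp_zero]

lemma K₁_factor {Y : D} (hP3 : ∀ g : C.P 3 ⟶ Y, g = 0) (ξ : C.K₁ ⟶ Y) :
    ∃ ζ : (C.P 4)⟦(1:ℤ)⟧ ⟶ Y, ξ = C.δ₁ ≫ ζ := by
  have h : C.ι₁ ≫ ξ = 0 := hP3 _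
  obtain ⟨ζ, hζ⟩ := Triangle.yoneda_exact₃ _ C.hT1 ξ h
  exact ⟨ζ, hζ⟩

lemma K₂_factor {Y : D} (hP2 : ∀ g : C.P 2 ⟶ Y, g = 0) (φ : C.K₂ ⟶ Y) :
    ∃ ψ : C.K₁⟦(1:ℤ)⟧ ⟶ Y, φ = C.δ₂ ≫ ψ := by
  have h : C.ι₂ ≫ φ = 0 := hP2 _
  obtain ⟨ψ, hψ⟩ := Triangle.yoneda_exact₃ _ C.hT2 φ h
  exact ⟨ψ, hψ⟩

lemma Sp_factor {Y : D} (hP1 : ∀ g : C.P 1 ⟶ Y, g = 0) (e : C.Sp ⟶ Y) :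
    ∃ ψ : C.K₂⟦(1:ℤ)⟧ ⟶ Y, e = C.δ₃ ≫ ψ := by
  have h : C.ι₃ ≫ e = 0 := hP1 _
  obtain ⟨ψ, hψ⟩ := Triangle.yoneda_exact₃ _ C.hT3 e h
  exact ⟨ψ, hψ⟩

/-- `Hom(K₁, Sp⟦q⟧) = 0` for `q ∉ {0,1}` -/
lemma K₁Sp_vanish {q : ℤ} (hq : q ≠ 0) (hq1 : q ≠ 1) : ∀ ξ : C.K₁ ⟶ C.Sp⟦q⟧, ξ = 0 := by
  intro ξ
  obtain ⟨ζ, hζ⟩ := C.K₁_factor (C.PSp_vanish (by omega) (by omega) hq) ξ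
  have : ζ = 0 := vanish_V1 (C.PSp_vanish (by omega) (by omega) (q := q - 1) (by omega))
    1 q (by ring) ζ
  rw [hζ, this, comp_zero]

/-- `Hom(K₁, P j⟦q⟧) = 0` for `q ∉ {0,1}` -/
lemma K₁P_vanish {j : ℕ} (h1 : 1 ≤ j) (h4 : j ≤ 4) {q : ℤ} (hq : q ≠ 0) (hq1 : q ≠ 1) :
    ∀ ξ : C.K₁ ⟶ (C.P j)⟦q⟧, ξ = 0 := by
  intro ξ
  obtain ⟨ζ, hζ⟩ := C.K₁_factor (C.base_vanish (by omega) (by omega) h1 h4 (Or.inl hq)) ξ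
  have : ζ = 0 := vanish_V1 (C.base_vanish (i := 4) (by omega) (by omega) h1 h4
    (Or.inl (by omega : q - 1 ≠ 0))) 1 q (by ring) ζ
  rw [hζ, this, comp_zero]

/-- general factorization through `v₁` of maps out of `K₁` -/
lemma K₁_v₁span {Y : D} (hP4 : ∀ g : (C.P 4)⟦(1:ℤ)⟧ ⟶ Y, g = 0)
    (hsat : ∀ ρ : C.P 3 ⟶ Y, C.b 3 ≫ ρ = 0 → ∃ u : C.P 2 ⟶ Y, ρ = C.a 2 ≫ u) :
    ∀ ξ : C.K₁ ⟶ Y, ∃ u : C.P 2 ⟶ Y, ξ = C.v₁ ≫ u := by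
  intro ξ
  have hbρ : C.b 3 ≫ (C.ι₁ ≫ ξ) = 0 := by
    rw [← Category.assoc, C.b3ι₁, zero_comp]
  obtain ⟨u, hu⟩ := hsat _ hbρ
  have hz : C.ι₁ ≫ (ξ - C.v₁ ≫ u) = 0 := by
    rw [Preadditive.comp_sub, ← Category.assoc]
    have : C.ι₁ ≫ C.v₁ = C.a 2 := C.TD.fac₁
    rw [this, ← hu, sub_self]
  obtain ⟨ζ, hζ⟩ := Triangle.yoneda_exact₃ _ C.hT1 (ξ - C.v₁ ≫ u) hz
  have hζ' : ξ - C.v₁ ≫ u = C.δ₁ ≫ ζ := hζ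
  rw [hP4 ζ, comp_zero] at hζ'
  exact ⟨u, by rwa [sub_eq_zero] at hζ'⟩

lemma sat_Sp : ∀ ρ : C.P 3 ⟶ C.Sp, C.b 3 ≫ ρ = 0 → ∃ u : C.P 2 ⟶ C.Sp, ρ = C.a 2 ≫ u := by
  intro ρ _
  obtain ⟨x, hx⟩ := C.PSp_span (i := 3) (by omega) (by omega) ρ
  refine ⟨x • (C.a 1 ≫ C.ι₃), ?_⟩
  rw [hx, gen_three, Linear.comp_smul]

lemma sat_P {j : ℕ} (h1 : 1 ≤ j) (h4 : j ≤ 4) :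
    ∀ ρ : C.P 3 ⟶ C.P j, C.b 3 ≫ ρ = 0 → ∃ u : C.P 2 ⟶ C.P j, ρ = C.a 2 ≫ u := by
  intro ρ hb
  interval_cases j
  · obtain ⟨x, y, hxy⟩ := C.pp_span (j := 1) (k := 2) (by omega) (by omega) (by omega) ρ
    have e1 : C.ap 1 2 = C.a 2 ≫ C.a 1 := by simp [pathComp]
    have e2 : C.bp 1 2 = C.b 2 ≫ C.b 1 := by simp [pathComp]
    have hb3 : C.b 3 ≫ C.b 2 ≫ C.b 1 ≠ 0 := by
      have := C.bp_ne_zero (j := 1) (k := 3) (by omega) (by omega) (by omega)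
      simpa [pathComp] using this
    have hy : y = 0 := by
      rw [hxy, e1, e2, Preadditive.comp_add, Linear.comp_smul, Linear.comp_smul,
        ← Category.assoc, C.hba 2, zero_comp, smul_zero, zero_add] at hb
      rcases smul_eq_zero.mp hb with h | h
      · exact h
      · exact absurd h hb3
    refine ⟨x • C.a 1, ?_⟩
    rw [hxy, hy, zero_smul, add_zero, e1, Linear.comp_smul]
  · obtain ⟨x, y, hxy⟩ := C.pp_span (j := 2) (k := 1) (by omega) (by omega) (by omega) ρ
    have e1 : C.ap 2 1 = C.a 2 := by simp [pathComp]
    have e2 : C.bp 2 1 = C.b 2 := by simp [pathComp]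
    have hb3 : C.b 3 ≫ C.b 2 ≠ 0 := by
      have := C.bp_ne_zero (j := 2) (k := 2) (by omega) (by omega) (by omega)
      simpa [pathComp] using this
    have hy : y = 0 := by
      rw [hxy, e1, e2, Preadditive.comp_add, Linear.comp_smul, Linear.comp_smul,
        C.hba 2, smul_zero, zero_add] at hb
      rcases smul_eq_zero.mp hb with h | h
      · exact h
      · exact absurd h hb3
    refine ⟨x • 𝟙 (C.P 2), ?_⟩
    rw [hxy, hy, zero_smul, add_zero, e1, Linear.comp_smul, Category.comp_id]
  · obtain ⟨x, hx⟩ := C.endo_span (i := 3) (by omega) (by omega) ρ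
    have hx0 : x = 0 := by
      rw [hx, Linear.comp_smul, Category.comp_id] at hb
      rcases smul_eq_zero.mp hb with h | h
      · exact h
      · exact absurd h C.b3_ne
    refine ⟨0, ?_⟩
    rw [hx, hx0, zero_smul, comp_zero]
  · refine ⟨0, ?_⟩
    rw [C.base_vanish' (i := 3) (by omega) (by omega) (by omega) (by omega) ρ, comp_zero]

lemma K₂_shift1_vanish {Y' : D} (hP2 : ∀ g : C.P 2 ⟶ Y'⟦(1:ℤ)⟧, g = 0)
    (hsp : ∀ ξ : C.K₁ ⟶ Y', ∃ u : C.P 2 ⟶ Y', ξ = C.v₁ ≫ u) :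
    ∀ φ : C.K₂ ⟶ Y'⟦(1:ℤ)⟧, φ = 0 := by
  intro φ
  obtain ⟨ψ, hψ⟩ := C.K₂_factor hP2 φ
  obtain ⟨ξ, hξ⟩ := span_H0 (1:ℤ) ψ
  obtain ⟨u, hu⟩ := hsp ξ
  rw [hψ, hξ, hu, Functor.map_comp, ← Category.assoc, C.δ₂v₁, zero_comp]

/-- `Hom(K₂, Sp) = 0` -/
lemma K₂Sp0 : ∀ φ : C.K₂ ⟶ C.Sp, φ = 0 := by
  intro φ
  have hρ : C.ι₂ ≫ φ = 0 := by
    obtain ⟨x, hx⟩ := C.PSp_span (i := 2) (by omega) (by omega) (C.ι₂ ≫ φ)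
    have hv : C.v₁ ≫ C.ι₂ ≫ φ = 0 := by rw [← Category.assoc, C.v₁ι₂, zero_comp]
    have ha : C.a 2 ≫ C.ι₂ ≫ φ = 0 := by
      have : C.ι₁ ≫ C.v₁ = C.a 2 := C.TD.fac₁
      rw [← this, Category.assoc, hv, comp_zero]
    rw [hx, gen_two] at ha
    rw [Linear.comp_smul] at ha
    have hg3 : C.a 2 ≫ C.a 1 ≫ C.ι₃ ≠ 0 := by
      have := C.gen_ne (i := 3) (by omega) (by omega)
      rwa [gen_three] at this
    rcases smul_eq_zero.mp ha with h | h
    · rw [hx, h, zero_smul]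
    · exact absurd h hg3
  obtain ⟨ψ, hψ0⟩ := Triangle.yoneda_exact₃ _ C.hT2 φ hρ
  have hψ : φ = C.δ₂ ≫ ψ := hψ0
  have hψz : ψ = 0 := vanish_V2 (C.K₁Sp_vanish (q := -1) (by omega) (by omega)) 1 (by ring) ψ
  rw [hψ, hψz, comp_zero]

/-- `Hom(K₂, Sp⟦q⟧) = 0` for `q ≠ 2` -/
lemma K₂Sp_vanish {q : ℤ} (hq : q ≠ 2) : ∀ φ : C.K₂ ⟶ C.Sp⟦q⟧, φ = 0 := by
  rcases eq_or_ne q 0 with rfl | hq0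
  · exact vanish_V3' C.K₂Sp0
  rcases eq_or_ne q 1 with rfl | hq1
  · exact C.K₂_shift1_vanish (C.PSp_vanish (by omega) (by omega) (by omega))
      (C.K₁_v₁span (C.PSp_shifted (by omega) (by omega) (by omega)) C.sat_Sp)
  · intro φ
    obtain ⟨ψ, hψ⟩ := C.K₂_factor (C.PSp_vanish (by omega) (by omega) hq0) φ
    have hψz : ψ = 0 := vanish_V1 (C.K₁Sp_vanish (q := q - 1) (by omega) (by omega))
      1 q (by ring) ψ
    rw [hψ, hψz, comp_zero]

/-- factorization of maps `K₂ ⟶ P j` through `v₂` -/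
lemma K₂_v₂span {Y : D} (hK₁ : ∀ ψ : C.K₁⟦(1:ℤ)⟧ ⟶ Y, ψ = 0)
    (hsat : ∀ ρ : C.P 2 ⟶ Y, C.a 2 ≫ ρ = 0 → ∃ u : C.P 1 ⟶ Y, ρ = C.b 1 ≫ u) :
    ∀ φ : C.K₂ ⟶ Y, ∃ u : C.P 1 ⟶ Y, φ = C.v₂ ≫ u := by
  intro φ
  have ha : C.a 2 ≫ (C.ι₂ ≫ φ) = 0 := by
    rw [← Category.assoc, C.a2ι₂, zero_comp]
  obtain ⟨u, hu⟩ := hsat _ ha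
  have hz : C.ι₂ ≫ (φ - C.v₂ ≫ u) = 0 := by
    rw [Preadditive.comp_sub, ← Category.assoc]
    have : C.ι₂ ≫ C.v₂ = C.b 1 := C.TD.fac₂
    rw [this, ← hu, sub_self]
  obtain ⟨ψ, hψ⟩ := Triangle.yoneda_exact₃ _ C.hT2 (φ - C.v₂ ≫ u) hz
  have hψ' : φ - C.v₂ ≫ u = C.δ₂ ≫ ψ := hψ
  rw [hK₁ ψ, comp_zero] at hψ'
  exact ⟨u, by rwa [sub_eq_zero] at hψ'⟩

lemma sat2_P {j : ℕ} (h1 : 1 ≤ j) (h4 : j ≤ 4) :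
    ∀ ρ : C.P 2 ⟶ C.P j, C.a 2 ≫ ρ = 0 → ∃ u : C.P 1 ⟶ C.P j, ρ = C.b 1 ≫ u := by
  intro ρ ha
  interval_cases j
  · obtain ⟨x, y, hxy⟩ := C.pp_span (j := 1) (k := 1) (by omega) (by omega) (by omega) ρ
    have e1 : C.ap 1 1 = C.a 1 := by simp [pathComp]
    have e2 : C.bp 1 1 = C.b 1 := by simp [pathComp]
    have ha2 : C.a 2 ≫ C.a 1 ≠ 0 := by
      have := C.ap_ne_zero (j := 1) (k := 2) (by omega) (by omega) (by omega)
      simpa [pathComp] using this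
    have hx : x = 0 := by
      rw [hxy, e1, e2, Preadditive.comp_add, Linear.comp_smul, Linear.comp_smul,
        C.hab 1, smul_zero, add_zero] at ha
      rcases smul_eq_zero.mp ha with h | h
      · exact h
      · exact absurd h ha2
    refine ⟨y • 𝟙 (C.P 1), ?_⟩
    rw [hxy, hx, zero_smul, zero_add, e2, Linear.comp_smul, Category.comp_id]
  · obtain ⟨x, hx⟩ := C.endo_span (i := 2) (by omega) (by omega) ρ
    have hx0 : x = 0 := by
      rw [hx, Linear.comp_smul, Category.comp_id] at ha
      rcases smul_eq_zero.mp ha with h | h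
      · exact h
      · exact absurd h C.a2_ne
    refine ⟨0, ?_⟩
    rw [hx, hx0, zero_smul, comp_zero]
  · refine ⟨0, ?_⟩
    rw [C.base_vanish' (i := 2) (by omega) (by omega) (by omega) (by omega) ρ, comp_zero]
  · refine ⟨0, ?_⟩
    rw [C.base_vanish' (i := 2) (by omega) (by omega) (by omega) (by omega) ρ, comp_zero]

lemma K₂P_v₂span {j : ℕ} (h1 : 1 ≤ j) (h4 : j ≤ 4) :
    ∀ φ : C.K₂ ⟶ C.P j, ∃ u : C.P 1 ⟶ C.P j, φ = C.v₂ ≫ u :=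
  C.K₂_v₂span (vanish_V2 (C.K₁P_vanish h1 h4 (q := -1) (by omega) (by omega)) 1 (by ring))
    (C.sat2_P h1 h4)

/-- `Hom(K₂, P j⟦q⟧) = 0` for `q ∉ {0,2}` -/
lemma K₂P_vanish {j : ℕ} (h1 : 1 ≤ j) (h4 : j ≤ 4) {q : ℤ} (hq0 : q ≠ 0) (hq2 : q ≠ 2) :
    ∀ φ : C.K₂ ⟶ (C.P j)⟦q⟧, φ = 0 := by
  rcases eq_or_ne q 1 with rfl | hq1
  · exact C.K₂_shift1_vanish (C.base_vanish (by omega) (by omega) h1 h4 (Or.inl (by omega)))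
      (C.K₁_v₁span (vanish_V2 (C.base_vanish (i := 4) (by omega) (by omega) h1 h4
        (Or.inl (by omega : (-1:ℤ) ≠ 0))) 1 (by ring)) (C.sat_P h1 h4))
  · intro φ
    obtain ⟨ψ, hψ⟩ := C.K₂_factor (C.base_vanish (by omega) (by omega) h1 h4 (Or.inl hq0)) φ
    have hψz : ψ = 0 := vanish_V1 (C.K₁P_vanish h1 h4 (q := q - 1) (by omega) (by omega))
      1 q (by ring) ψ
    rw [hψ, hψz, comp_zero]

/-- `Hom(Sp, Sp⟦p⟧) = 0` for `p ∉ {0,3}` -/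
lemma SpSp_vanish {p : ℤ} (hp0 : p ≠ 0) (hp3 : p ≠ 3) : ∀ e : C.Sp ⟶ C.Sp⟦p⟧, e = 0 := by
  intro e
  obtain ⟨ψ, hψ⟩ := C.Sp_factor (C.PSp_vanish (by omega) (by omega) hp0) e
  have hψz : ψ = 0 := vanish_V1 (C.K₂Sp_vanish (q := p - 1) (by omega)) 1 p (by ring) ψ
  rw [hψ, hψz, comp_zero]

lemma SpSp0_span : ∀ e : C.Sp ⟶ C.Sp, ∃ x : ℂ, e = x • 𝟙 C.Sp := by
  intro e
  obtain ⟨x, hx⟩ := C.PSp_span (i := 1) (by omega) (by omega) (C.ι₃ ≫ e)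
  rw [gen_one] at hx
  have hz : C.ι₃ ≫ (e - x • 𝟙 C.Sp) = 0 := by
    rw [Preadditive.comp_sub, Linear.comp_smul, Category.comp_id, ← hx, sub_self]
  obtain ⟨ψ, hψ0⟩ := Triangle.yoneda_exact₃ _ C.hT3 (e - x • 𝟙 C.Sp) hz
  have hψ : e - x • 𝟙 C.Sp = C.δ₃ ≫ ψ := hψ0
  have hψz : ψ = 0 := vanish_V2 (C.K₂Sp_vanish (q := -1) (by omega)) 1 (by ring) ψ
  rw [hψz, comp_zero, sub_eq_zero] at hψ
  exact ⟨x, hψ⟩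

lemma idSp_ne : 𝟙 C.Sp ≠ 0 := by
  intro h
  apply C.gen_ne (i := 1) (by omega) (by omega)
  rw [gen_one, ← Category.comp_id C.ι₃, h, comp_zero]

/-- `Hom(Sp, P j) = 0` -/
lemma SpP0 {j : ℕ} (h1 : 1 ≤ j) (h4 : j ≤ 4) : ∀ e : C.Sp ⟶ C.P j, e = 0 := by
  intro e
  have hρ : C.ι₃ ≫ e = 0 := by
    rcases Nat.lt_or_ge 1 j with hj | hj
    · exact C.base_vanish' (by omega) (by omega) (by omega) (by omega) _
    · have hj1 : j = 1 := by omega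
      subst hj1
      obtain ⟨x, hx⟩ := C.endo_span (i := 1) (by omega) (by omega) (C.ι₃ ≫ e)
      have hv : C.v₂ ≫ C.ι₃ ≫ e = 0 := by rw [← Category.assoc, C.v₂ι₃, zero_comp]
      rw [hx] at hv
      have hx0 : x = 0 := by
        rw [Linear.comp_smul, Category.comp_id] at hv
        rcases smul_eq_zero.mp hv with h | h
        · exact h
        · exact absurd h C.v₂_ne
      rw [hx, hx0, zero_smul]
  obtain ⟨ψ, hψ0⟩ := Triangle.yoneda_exact₃ _ C.hT3 e hρ
  have hψ : e = C.δ₃ ≫ ψ := hψ0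
  have hψz : ψ = 0 := vanish_V2 (C.K₂P_vanish h1 h4 (q := -1) (by omega) (by omega)) 1
    (by ring) ψ
  rw [hψ, hψz, comp_zero]

/-- `Hom(Sp, P j⟦m⟧) = 0` for `m ≠ 3` -/
lemma SpP_vanish {j : ℕ} (h1 : 1 ≤ j) (h4 : j ≤ 4) {m : ℤ} (hm : m ≠ 3) :
    ∀ e : C.Sp ⟶ (C.P j)⟦m⟧, e = 0 := by
  rcases eq_or_ne m 0 with rfl | hm0
  · exact vanish_V3' (C.SpP0 h1 h4)
  intro e
  obtain ⟨ψ, hψ⟩ := C.Sp_factor (C.base_vanish (by omega) (by omega) h1 h4 (Or.inl hm0)) e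
  rcases eq_or_ne m 1 with rfl | hm1
  · obtain ⟨φ, hφ⟩ := span_H0 (1:ℤ) ψ
    obtain ⟨u, hu⟩ := C.K₂P_v₂span h1 h4 φ
    rw [hψ, hφ, hu, Functor.map_comp, ← Category.assoc, C.δ₃v₂, zero_comp]
  · have hψz : ψ = 0 := vanish_V1 (C.K₂P_vanish h1 h4 (q := m - 1) (by omega) (by omega))
      1 m (by ring) ψ
    rw [hψ, hψz, comp_zero]

/- ## the degree-3 chain maps out of `Sp` -/

/-- the composite `Sp ⟶ P 4⟦3⟧ ⟶ Y⟦3⟧` induced by `w : P 4 ⟶ Y` -/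
def chainMap (Y : D) (w : C.P 4 ⟶ Y) : C.Sp ⟶ Y⟦(3:ℤ)⟧ :=
  C.δ₃ ≫ ((shiftFunctor D (1:ℤ)).map
      (C.δ₂ ≫ ((shiftFunctor D (1:ℤ)).map (C.δ₁ ≫ (shiftFunctor D (1:ℤ)).map w) ≫
        (sh12 (D := D)).inv.app Y)) ≫ (sh23 (D := D)).inv.app Y)

lemma chain_span {Y : D} (h1v : ∀ g : C.P 1 ⟶ Y⟦(3:ℤ)⟧, g = 0)
    (h2v : ∀ g : C.P 2 ⟶ Y⟦(2:ℤ)⟧, g = 0)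
    (h3v : ∀ g : C.P 3 ⟶ Y⟦(1:ℤ)⟧, g = 0) :
    ∀ e : C.Sp ⟶ Y⟦(3:ℤ)⟧, ∃ w : C.P 4 ⟶ Y, e = C.chainMap Y w := by
  intro e
  obtain ⟨ψ, hψ⟩ := C.Sp_factor h1v e
  obtain ⟨φ, hφ⟩ := (shiftFunctor D (1:ℤ)).map_surjective (ψ ≫ (sh23 (D := D)).hom.app Y)
  have hψ' : ψ = (shiftFunctor D (1:ℤ)).map φ ≫ (sh23 (D := D)).inv.app Y := by
    rw [hφ, Category.assoc, Iso.hom_inv_id_app, Category.comp_id]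
  obtain ⟨χ, hχ⟩ := C.K₂_factor h2v φ
  obtain ⟨ξ, hξ⟩ := (shiftFunctor D (1:ℤ)).map_surjective (χ ≫ (sh12 (D := D)).hom.app Y)
  have hχ' : χ = (shiftFunctor D (1:ℤ)).map ξ ≫ (sh12 (D := D)).inv.app Y := by
    rw [hξ, Category.assoc, Iso.hom_inv_id_app, Category.comp_id]
  obtain ⟨ζ, hζ⟩ := C.K₁_factor h3v ξ
  obtain ⟨w, hw⟩ := (shiftFunctor D (1:ℤ)).map_surjective ζ
  refine ⟨w, ?_⟩
  rw [hψ, hψ', hχ, hχ', hζ, ← hw]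
  rfl

lemma chain_ker {Y : D} (h1v : ∀ g : C.P 1 ⟶ Y⟦(2:ℤ)⟧, g = 0)
    (h2v : ∀ g : C.P 2 ⟶ Y⟦(1:ℤ)⟧, g = 0)
    (w : C.P 4 ⟶ Y) (hw : C.chainMap Y w = 0) : ∃ ρ : C.P 3 ⟶ Y, w = C.b 3 ≫ ρ := by
  -- peel δ₃
  have h1 : (shiftFunctor D (1:ℤ)).map
      (C.δ₂ ≫ ((shiftFunctor D (1:ℤ)).map (C.δ₁ ≫ (shiftFunctor D (1:ℤ)).map w) ≫
        (sh12 (D := D)).inv.app Y)) ≫ (sh23 (D := D)).inv.app Y = 0 := by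
    obtain ⟨g, hg⟩ := Triangle.yoneda_exact₃ _ (rot_of_distTriang _ C.hT3) _ hw
    have hgz : g = 0 := vanish_V1 h1v 1 3 (by ring) g
    rw [hg, hgz, comp_zero]
    rfl
  have h2 : C.δ₂ ≫ ((shiftFunctor D (1:ℤ)).map (C.δ₁ ≫ (shiftFunctor D (1:ℤ)).map w) ≫
      (sh12 (D := D)).inv.app Y) = 0 := by
    apply (shiftFunctor D (1:ℤ)).map_injective
    rw [Functor.map_zero]
    have := congrArg (fun t => t ≫ (sh23 (D := D)).hom.app Y) h1
    simpa using this
  have h3 : (shiftFunctor D (1:ℤ)).map (C.δ₁ ≫ (shiftFunctor D (1:ℤ)).map w) ≫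
      (sh12 (D := D)).inv.app Y = 0 := by
    obtain ⟨g, hg⟩ := Triangle.yoneda_exact₃ _ (rot_of_distTriang _ C.hT2) _ h2
    have hgz : g = 0 := vanish_V1 h2v 1 2 (by ring) g
    rw [hg, hgz, comp_zero]
    rfl
  have h4 : C.δ₁ ≫ (shiftFunctor D (1:ℤ)).map w = 0 := by
    apply (shiftFunctor D (1:ℤ)).map_injective
    rw [Functor.map_zero]
    have := congrArg (fun t => t ≫ (sh12 (D := D)).hom.app Y) h3
    simpa using this
  obtain ⟨g, hg⟩ := Triangle.yoneda_exact₃ _ (rot_of_distTriang _ C.hT1) _ h4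
  obtain ⟨ρ, hρ⟩ := span_H0 (1:ℤ) g
  refine ⟨-ρ, ?_⟩
  apply (shiftFunctor D (1:ℤ)).map_injective
  rw [hg, hρ, show (C.T1.rotate).mor₃ = -(shiftFunctor D (1:ℤ)).map (C.b 3) from rfl]
  exact (by simp : ∀ ρ' : C.P 3 ⟶ Y, (-(shiftFunctor D (1:ℤ)).map (C.b 3)) ≫
    (shiftFunctor D (1:ℤ)).map ρ' = (shiftFunctor D (1:ℤ)).map (C.b 3 ≫ (-ρ'))) ρ

lemma chain_natural {Y Y' : D} (w : C.P 4 ⟶ Y) (u : Y ⟶ Y') :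
    C.chainMap Y w ≫ (shiftFunctor D (3:ℤ)).map u = C.chainMap Y' (w ≫ u) := by
  have n23 : (sh23 (D := D)).inv.app Y ≫ (shiftFunctor D (3:ℤ)).map u =
      (shiftFunctor D (1:ℤ)).map ((shiftFunctor D (2:ℤ)).map u) ≫
        (sh23 (D := D)).inv.app Y' := ((sh23 (D := D)).inv.naturality u).symm
  have n12 : (sh12 (D := D)).inv.app Y ≫ (shiftFunctor D (2:ℤ)).map u =
      (shiftFunctor D (1:ℤ)).map ((shiftFunctor D (1:ℤ)).map u) ≫
        (sh12 (D := D)).inv.app Y' := ((sh12 (D := D)).inv.naturality u).symm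
  have n12' := congrArg (fun t => (shiftFunctor D (1:ℤ)).map t) n12
  simp only [Functor.map_comp] at n12'
  have n12A : ∀ {Z : D} (h : ((C.P 4)⟦(1:ℤ)⟧)⟦(1:ℤ)⟧⟦(1:ℤ)⟧ ⟶ Z) (hmm : True),
      True := fun _ _ => trivial
  have n12B : ∀ {Z : D} (h : (Y'⟦(2:ℤ)⟧)⟦(1:ℤ)⟧ ⟶ Z),
      (shiftFunctor D (1:ℤ)).map ((sh12 (D := D)).inv.app Y) ≫
        ((shiftFunctor D (1:ℤ)).map ((shiftFunctor D (2:ℤ)).map u) ≫ h) =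
      (shiftFunctor D (1:ℤ)).map ((shiftFunctor D (1:ℤ)).map ((shiftFunctor D (1:ℤ)).map u)) ≫
        ((shiftFunctor D (1:ℤ)).map ((sh12 (D := D)).inv.app Y') ≫ h) := by
    intro Z h
    rw [← Category.assoc, n12', Category.assoc]
  simp [chainMap, Category.assoc, Functor.map_comp, n23, n12B]

/-- the distinguished degree-3 endomorphism of `Sp` -/
def f₀ : C.Sp ⟶ C.Sp⟦(3:ℤ)⟧ := C.chainMap C.Sp (C.gen 4)

lemma f₀_ne : C.f₀ ≠ 0 := by
  intro h
  obtain ⟨ρ, hρ⟩ := C.chain_ker (C.PSp_vanish (by omega) (by omega) (by omega))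
    (C.PSp_vanish (by omega) (by omega) (by omega)) (C.gen 4) h
  obtain ⟨x, hx⟩ := C.PSp_span (i := 3) (by omega) (by omega) ρ
  rw [hx, gen_three, Linear.comp_smul, ← Category.assoc, C.hba 2, zero_comp, smul_zero] at hρ
  exact C.gen_ne (i := 4) (by omega) (by omega) hρ

lemma V_span : ∀ e : C.Sp ⟶ C.Sp⟦(3:ℤ)⟧,
    ∃ x : ℂ, e = C.f₀ ≫ (shiftFunctor D (3:ℤ)).map (x • 𝟙 C.Sp) := by
  intro e
  obtain ⟨w, hw⟩ := C.chain_span (C.PSp_vanish (by omega) (by omega) (by omega))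
    (C.PSp_vanish (by omega) (by omega) (by omega))
    (C.PSp_vanish (by omega) (by omega) (by omega)) e
  obtain ⟨x, hx⟩ := C.PSp_span (i := 4) (by omega) (by omega) w
  refine ⟨x, ?_⟩
  rw [f₀, C.chain_natural, hw, hx]
  congr 1
  rw [Linear.comp_smul, Category.comp_id]

end Ctx

end StageA


section Dim

variable (C : Ctx D) (SD : SerreData D)

/-- right action of `End(Sp)`-scalars on degree-3 maps -/
def TactL (x : ℂ) : (C.Sp ⟶ C.Sp⟦(3:ℤ)⟧) →ₗ[ℂ] (C.Sp ⟶ C.Sp⟦(3:ℤ)⟧) :=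
  Linear.rightComp ℂ C.Sp ((shiftFunctor D (3:ℤ)).map (x • 𝟙 C.Sp))

@[simp] lemma TactL_apply (x : ℂ) (e : C.Sp ⟶ C.Sp⟦(3:ℤ)⟧) :
    TactL C x e = e ≫ (shiftFunctor D (3:ℤ)).map (x • 𝟙 C.Sp) := rfl

lemma TactL_mul (x y : ℂ) (e : C.Sp ⟶ C.Sp⟦(3:ℤ)⟧) :
    TactL C x (TactL C y e) = TactL C (x * y) e := by
  simp only [TactL_apply, Category.assoc, ← Functor.map_comp]
  congr 2
  rw [Linear.smul_comp, Linear.comp_smul, Category.id_comp, smul_smul, mul_comm]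

lemma TactL_one (e : C.Sp ⟶ C.Sp⟦(3:ℤ)⟧) : TactL C 1 e = e := by
  simp only [TactL_apply, one_smul]
  rw [CategoryTheory.Functor.map_id, Category.comp_id]

lemma TactL_zero' (e : C.Sp ⟶ C.Sp⟦(3:ℤ)⟧) : TactL C 0 e = 0 := by
  simp only [TactL_apply, zero_smul, Functor.map_zero, comp_zero]

include SD in
lemma TactL_scalar (x : ℂ) :
    ∃ μ : ℂ, (x ≠ 0 → μ ≠ 0) ∧ ∀ e : C.Sp ⟶ C.Sp⟦(3:ℤ)⟧, TactL C x e = μ • e := by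
  haveI hfin : FiniteDimensional ℂ (C.Sp ⟶ C.Sp⟦(3:ℤ)⟧) := homFinite SD _ _
  rcases eq_or_ne x 0 with rfl | hx
  · exact ⟨0, fun h => absurd rfl h, fun e => by rw [TactL_zero', zero_smul]⟩
  haveI : Nontrivial (C.Sp ⟶ C.Sp⟦(3:ℤ)⟧) := ⟨⟨C.f₀, 0, C.f₀_ne⟩⟩
  obtain ⟨μ, hμ⟩ := Module.End.exists_eigenvalue (TactL C x)
  obtain ⟨v, hv⟩ := hμ.exists_hasEigenvector
  have hv0 : v ≠ 0 := hv.right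
  have hveq : TactL C x v = μ • v := hv.apply_eq_smul
  obtain ⟨z, hz⟩ := C.V_span v
  have hzv : v = TactL C z C.f₀ := hz
  have hz0 : z ≠ 0 := by
    intro h
    rw [h, TactL_zero'] at hzv
    exact hv0 hzv
  refine ⟨μ, ?_, ?_⟩
  · intro _ hμ0
    rw [hμ0, zero_smul] at hveq
    have : v = 0 := by
      have := congrArg (TactL C x⁻¹) hzv.symm
      calc v = TactL C x⁻¹ (TactL C x v) := by
              rw [TactL_mul, inv_mul_cancel₀ hx, TactL_one]
        _ = 0 := by rw [hveq, map_zero]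
    exact hv0 this
  · intro e
    obtain ⟨y, hy⟩ := C.V_span e
    have hey : e = TactL C (y * z⁻¹) v := by
      rw [hzv, TactL_mul]
      have : y * z⁻¹ * z = y := by field_simp
      rw [this]
      exact hy
    rw [hey, TactL_mul, mul_comm x (y * z⁻¹), ← TactL_mul, hveq, map_smul]

include SD in
/-- `Hom(Sp, Sp⟦3⟧)` is spanned by `f₀` -/
lemma V_dim : ∀ e : C.Sp ⟶ C.Sp⟦(3:ℤ)⟧, ∃ y : ℂ, e = y • C.f₀ := by
  intro e
  obtain ⟨x, hx⟩ := C.V_span e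
  obtain ⟨μ, _, hμ⟩ := TactL_scalar C SD x
  exact ⟨μ, by rw [hx, ← TactL_apply, hμ]⟩

include SD in
/-- the `homsAre` statement for `Sp` -/
theorem Sp_homsAre : homsAre C.Sp C.Sp (fun p => if p = 0 ∨ p = 3 then 1 else 0) := by
  intro p
  by_cases h0 : p = 0
  · subst h0
    have hval : (if (0:ℤ) = 0 ∨ (0:ℤ) = 3 then 1 else 0) = 1 := by norm_num
    refine nonempty_congr_n hval ?_
    set g₀ : C.Sp ⟶ C.Sp⟦(0:ℤ)⟧ := (shiftFunctorZero D ℤ).inv.app C.Sp with hg₀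
    apply oneEquiv g₀
    · intro h
      apply C.idSp_ne
      have : 𝟙 C.Sp = g₀ ≫ (shiftFunctorZero D ℤ).hom.app C.Sp := by simp [hg₀]
      rw [this, h, zero_comp]
    · intro e
      obtain ⟨x, hx⟩ := C.SpSp0_span (e ≫ (shiftFunctorZero D ℤ).hom.app C.Sp)
      refine ⟨x, ?_⟩
      have : e = (e ≫ (shiftFunctorZero D ℤ).hom.app C.Sp) ≫
          (shiftFunctorZero D ℤ).inv.app C.Sp := by simp
      rw [this, hx, Linear.smul_comp, Category.id_comp]
  by_cases h3 : p = 3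
  · subst h3
    have hval : (if (3:ℤ) = 0 ∨ (3:ℤ) = 3 then 1 else 0) = 1 := by norm_num
    exact nonempty_congr_n hval (oneEquiv C.f₀ C.f₀_ne (V_dim C SD))
  · have hval : (if p = 0 ∨ p = 3 then 1 else 0) = 0 := by simp [h0, h3]
    exact nonempty_congr_n hval (zeroEquiv (C.SpSp_vanish h0 h3))

end Dim


section Main

namespace Ctx

variable (C : Ctx D) (SD : SerreData D)

/-- the putative Serre-dual comparison morphism -/
noncomputable def theta : C.Sp⟦(3:ℤ)⟧ ⟶ SD.S.obj C.Sp :=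
  (SD.nondeg C.f₀ C.f₀_ne).choose

lemma theta_spec : SD.trace C.Sp (C.f₀ ≫ theta C SD) ≠ 0 :=
  (SD.nondeg C.f₀ C.f₀_ne).choose_spec

/-- pure `α`-paths `P 4 ⟶ P i` -/
def apg : (i : ℕ) → (C.P 4 ⟶ C.P i)
  | 1 => C.a 3 ≫ C.a 2 ≫ C.a 1
  | 2 => C.a 3 ≫ C.a 2
  | 3 => C.a 3
  | 4 => 𝟙 _
  | _ => 0

lemma apg_gen {i : ℕ} (h1 : 1 ≤ i) (h4 : i ≤ 4) : C.apg i ≫ C.gen i = C.gen 4 := by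
  interval_cases i
  · show (C.a 3 ≫ C.a 2 ≫ C.a 1) ≫ C.ι₃ = _
    rw [gen_four]
    simp [Category.assoc]
  · show (C.a 3 ≫ C.a 2) ≫ C.a 1 ≫ C.ι₃ = _
    rw [gen_four]
    simp [Category.assoc]
  · show C.a 3 ≫ C.a 2 ≫ C.a 1 ≫ C.ι₃ = _
    rw [gen_four]
  · show 𝟙 _ ≫ C.gen 4 = _
    rw [Category.id_comp]

lemma chain_smul_gen (x : ℂ) :
    C.chainMap C.Sp (x • C.gen 4) = TactL C x C.f₀ := by
  have h : x • C.gen 4 = C.gen 4 ≫ (x • 𝟙 C.Sp) := by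
    rw [Linear.comp_smul, Category.comp_id]
  rw [h, ← C.chain_natural, TactL_apply, f₀]

include SD in
lemma chain_trace_zero (x : ℂ)
    (h : SD.trace C.Sp (C.chainMap C.Sp (x • C.gen 4) ≫ theta C SD) = 0) : x = 0 := by
  obtain ⟨μ, hμ0, hμ⟩ := TactL_scalar C SD x
  rw [chain_smul_gen, hμ, Linear.smul_comp, map_smul, smul_eq_mul] at h
  rcases mul_eq_zero.mp h with h | h
  · by_contra hx
    exact hμ0 hx h
  · exact absurd h (theta_spec C SD)

lemma chain_b3_zero {Y : D} (ρ : C.P 3 ⟶ Y) : C.chainMap Y (C.b 3 ≫ ρ) = 0 := by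
  have h : C.δ₁ ≫ (shiftFunctor D (1:ℤ)).map (C.b 3 ≫ ρ) = 0 := by
    rw [Functor.map_comp, ← Category.assoc, C.δ₁b3, zero_comp]
  rw [chainMap, h]
  simp

lemma chainMap_zero' {Y : D} : C.chainMap Y 0 = 0 := by
  simp [chainMap]

lemma A_span {i : ℕ} (h1 : 1 ≤ i) (h4 : i ≤ 4) :
    ∀ f : C.Sp ⟶ (C.P i)⟦(3:ℤ)⟧, ∃ χ : C.P 4 ⟶ C.P i, f = C.chainMap (C.P i) χ :=
  C.chain_span (C.base_vanish (by omega) (by omega) h1 h4 (Or.inl (by omega)))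
    (C.base_vanish (by omega) (by omega) h1 h4 (Or.inl (by omega)))
    (C.base_vanish (by omega) (by omega) h1 h4 (Or.inl (by omega)))

include SD in
lemma left_nondeg {i : ℕ} (h1 : 1 ≤ i) (h4 : i ≤ 4) :
    ∀ f : C.Sp ⟶ (C.P i)⟦(3:ℤ)⟧,
      (∀ u : (C.P i)⟦(3:ℤ)⟧ ⟶ C.Sp⟦(3:ℤ)⟧, SD.trace C.Sp ((f ≫ u) ≫ theta C SD) = 0) →
      f = 0 := by
  intro f hker
  obtain ⟨χ, hχ⟩ := C.A_span h1 h4 f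
  have key : ∀ x : ℂ, χ ≫ C.gen i = x • C.gen 4 → x = 0 := by
    intro x hx
    have := hker ((shiftFunctor D (3:ℤ)).map (C.gen i))
    rw [hχ, C.chain_natural, hx] at this
    exact chain_trace_zero C SD x this
  interval_cases i
  · obtain ⟨α, β, hc⟩ := C.pp_span (j := 1) (k := 3) (by omega) (by omega) (by omega) χ
    have hb : C.bp 1 3 ≫ C.gen 1 = 0 := by
      rw [gen_one]
      have e2 : C.bp 1 3 = C.b 3 ≫ C.b 2 ≫ C.b 1 := by simp [pathComp]
      rw [e2]
      simp [Category.assoc, C.b1ι₃]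
    have ha : C.ap 1 3 ≫ C.gen 1 = C.gen 4 := by
      rw [gen_one, gen_four]
      have e1 : C.ap 1 3 = C.a 3 ≫ C.a 2 ≫ C.a 1 := by simp [pathComp]
      rw [e1]
      simp [Category.assoc]
    have hα : α = 0 := by
      apply key α
      rw [hc, Preadditive.add_comp, Linear.smul_comp, Linear.smul_comp, ha, hb, smul_zero,
        add_zero]
    have hχ2 : χ = C.b 3 ≫ (β • (C.b 2 ≫ C.b 1 ≫ 𝟙 _)) := by
      rw [hc, hα, zero_smul, zero_add, Linear.comp_smul]
      congr 1
    rw [hχ, hχ2, C.chain_b3_zero]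
  · obtain ⟨α, β, hc⟩ := C.pp_span (j := 2) (k := 2) (by omega) (by omega) (by omega) χ
    have hb : C.bp 2 2 ≫ C.gen 2 = 0 := by
      rw [gen_two]
      have e2 : C.bp 2 2 = C.b 3 ≫ C.b 2 := by simp [pathComp]
      rw [e2, Category.assoc, ← Category.assoc (C.b 2), C.hba 1, zero_comp, comp_zero]
    have ha : C.ap 2 2 ≫ C.gen 2 = C.gen 4 := by
      rw [gen_two, gen_four]
      have e1 : C.ap 2 2 = C.a 3 ≫ C.a 2 := by simp [pathComp]
      rw [e1]
      simp [Category.assoc]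
    have hα : α = 0 := by
      apply key α
      rw [hc, Preadditive.add_comp, Linear.smul_comp, Linear.smul_comp, ha, hb, smul_zero,
        add_zero]
    have hχ2 : χ = C.b 3 ≫ (β • (C.b 2 ≫ 𝟙 _)) := by
      rw [hc, hα, zero_smul, zero_add, Linear.comp_smul]
      congr 1
    rw [hχ, hχ2, C.chain_b3_zero]
  · obtain ⟨α, β, hc⟩ := C.pp_span (j := 3) (k := 1) (by omega) (by omega) (by omega) χ
    have hb : C.bp 3 1 ≫ C.gen 3 = 0 := by
      rw [gen_three]
      have e2 : C.bp 3 1 = C.b 3 := by simp [pathComp]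
      rw [e2, ← Category.assoc, C.hba 2, zero_comp]
    have ha : C.ap 3 1 ≫ C.gen 3 = C.gen 4 := by
      rw [gen_three, gen_four]
      have e1 : C.ap 3 1 = C.a 3 := by simp [pathComp]
      rw [e1]
    have hα : α = 0 := by
      apply key α
      rw [hc, Preadditive.add_comp, Linear.smul_comp, Linear.smul_comp, ha, hb, smul_zero,
        add_zero]
    have hχ2 : χ = C.b 3 ≫ (β • 𝟙 _) := by
      rw [hc, hα, zero_smul, zero_add, Linear.comp_smul]
      congr 1
    rw [hχ, hχ2, C.chain_b3_zero]
  · obtain ⟨α, hc⟩ := C.endo_span (i := 4) (by omega) (by omega) χ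
    have hα : α = 0 := by
      apply key α
      rw [hc, Linear.smul_comp, Category.id_comp]
    rw [hχ, hc, hα, zero_smul, C.chainMap_zero']

include SD in
lemma right_nondeg {i : ℕ} (h1 : 1 ≤ i) (h4 : i ≤ 4) :
    ∀ u : (C.P i)⟦(3:ℤ)⟧ ⟶ C.Sp⟦(3:ℤ)⟧,
      (∀ f : C.Sp ⟶ (C.P i)⟦(3:ℤ)⟧, SD.trace C.Sp ((f ≫ u) ≫ theta C SD) = 0) →
      u = 0 := by
  intro u hker
  obtain ⟨ubar, hu⟩ := span_H0 (3:ℤ) u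
  obtain ⟨x, hx⟩ := C.PSp_span h1 h4 ubar
  have this1 := hker (C.chainMap (C.P i) (C.apg i))
  have hcomp : C.chainMap (C.P i) (C.apg i) ≫ u = C.chainMap C.Sp (x • C.gen 4) := by
    rw [hu, C.chain_natural, hx, Linear.comp_smul, C.apg_gen h1 h4]
  rw [hcomp] at this1
  have hx0 := chain_trace_zero C SD x this1
  rw [hu, hx, hx0, zero_smul, Functor.map_zero]


/-- postcomposition with `theta` -/
noncomputable def tmap (W : D) : (W ⟶ C.Sp⟦(3:ℤ)⟧) →ₗ[ℂ] (W ⟶ SD.S.obj C.Sp) :=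
  Linear.rightComp ℂ W (theta C SD)

@[simp] lemma tmap_apply (W : D) (u : W ⟶ C.Sp⟦(3:ℤ)⟧) :
    tmap C SD W u = u ≫ theta C SD := rfl

/-- the composition pairing, valued in `ℂ` via the Serre trace against `theta` -/
noncomputable def betaL (i : ℕ) : (C.Sp ⟶ (C.P i)⟦(3:ℤ)⟧) →ₗ[ℂ]
    Module.Dual ℂ ((C.P i)⟦(3:ℤ)⟧ ⟶ C.Sp⟦(3:ℤ)⟧) :=
  LinearMap.mk₂ ℂ (fun f u => SD.trace C.Sp ((f ≫ u) ≫ theta C SD))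
    (by intro f f' u; rw [Preadditive.add_comp, Preadditive.add_comp, map_add])
    (by intro x f u; rw [Linear.smul_comp, Linear.smul_comp, map_smul, smul_eq_mul])
    (by intro f u u'; rw [Preadditive.comp_add, Preadditive.add_comp, map_add])
    (by intro x f u; rw [Linear.comp_smul, Linear.smul_comp, map_smul, smul_eq_mul])

@[simp] lemma betaL_apply (i : ℕ) (f : C.Sp ⟶ (C.P i)⟦(3:ℤ)⟧)
    (u : (C.P i)⟦(3:ℤ)⟧ ⟶ C.Sp⟦(3:ℤ)⟧) :
    betaL C SD i f u = SD.trace C.Sp ((f ≫ u) ≫ theta C SD) := rfl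

include SD in
lemma betaL_bij {i : ℕ} (h1 : 1 ≤ i) (h4 : i ≤ 4) :
    Function.Bijective (betaL C SD i) := by
  haveI hA : FiniteDimensional ℂ (C.Sp ⟶ (C.P i)⟦(3:ℤ)⟧) := homFinite SD _ _
  haveI hB : FiniteDimensional ℂ ((C.P i)⟦(3:ℤ)⟧ ⟶ C.Sp⟦(3:ℤ)⟧) := homFinite SD _ _
  have hinjL : Function.Injective (betaL C SD i) := by
    rw [injective_iff_map_eq_zero]
    intro f hf
    refine left_nondeg C SD h1 h4 f fun u => ?_
    have := congrFun (congrArg DFunLike.coe hf) u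
    simpa using this
  have hinjR : Function.Injective (betaL C SD i).flip := by
    rw [injective_iff_map_eq_zero]
    intro u hu
    refine right_nondeg C SD h1 h4 u fun f => ?_
    have := congrFun (congrArg DFunLike.coe hu) f
    simpa using this
  have hle1 := LinearMap.finrank_le_finrank_of_injective hinjL
  have hle2 := LinearMap.finrank_le_finrank_of_injective hinjR
  rw [Subspace.dual_finrank_eq] at hle1 hle2
  have heq : Module.finrank ℂ (C.Sp ⟶ (C.P i)⟦(3:ℤ)⟧) =
      Module.finrank ℂ ((C.P i)⟦(3:ℤ)⟧ ⟶ C.Sp⟦(3:ℤ)⟧) := le_antisymm hle1 hle2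
  refine ⟨hinjL, ?_⟩
  rw [← LinearMap.range_eq_top]
  apply Submodule.eq_top_of_finrank_eq
  rw [LinearMap.finrank_range_of_inj hinjL, Subspace.dual_finrank_eq, heq]

include SD in
lemma t_bij3 {i : ℕ} (h1 : 1 ≤ i) (h4 : i ≤ 4) :
    Function.Bijective (tmap C SD ((C.P i)⟦(3:ℤ)⟧)) := by
  have hid : (tmap C SD ((C.P i)⟦(3:ℤ)⟧)).dualMap.comp
      (pairEquiv SD C.Sp ((C.P i)⟦(3:ℤ)⟧)).toLinearMap = betaL C SD i := by
    apply LinearMap.ext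
    intro f
    apply LinearMap.ext
    intro u
    simp only [LinearMap.coe_comp, Function.comp_apply, LinearEquiv.coe_coe,
      LinearMap.dualMap_apply, betaL_apply, pairEquiv_apply, tmap_apply, Category.assoc]
  have hbij' : Function.Bijective
      ((tmap C SD ((C.P i)⟦(3:ℤ)⟧)).dualMap.comp
        (pairEquiv SD C.Sp ((C.P i)⟦(3:ℤ)⟧)).toLinearMap) := by
    rw [hid]
    exact betaL_bij C SD h1 h4
  rw [LinearMap.coe_comp] at hbij'
  have hd : Function.Bijective (tmap C SD ((C.P i)⟦(3:ℤ)⟧)).dualMap :=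
    (Function.Bijective.of_comp_iff _
      (by exact (pairEquiv SD C.Sp ((C.P i)⟦(3:ℤ)⟧)).bijective)).mp hbij'
  exact LinearMap.dualMap_bijective_iff.mp hd

include SD in
lemma t_bij {i : ℕ} (h1 : 1 ≤ i) (h4 : i ≤ 4) (p : ℤ) :
    Function.Bijective (tmap C SD ((C.P i)⟦p⟧)) := by
  by_cases hp : p = 3
  · subst hp
    exact t_bij3 C SD h1 h4
  · constructor
    · intro u u' _
      have hu : u = 0 := vanish_V1 (C.PSp_vanish h1 h4 (q := 3 - p) (by omega)) p 3 (by ring) u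
      have hu' : u' = 0 := vanish_V1 (C.PSp_vanish h1 h4 (q := 3 - p) (by omega)) p 3
        (by ring) u'
      rw [hu, hu']
    · intro g
      have hg : g = 0 := serre_vanish SD (C.SpP_vanish h1 h4 hp) g
      exact ⟨0, by rw [map_zero, hg]⟩

include SD in
lemma theta_inj_shift {i : ℕ} (h1 : 1 ≤ i) (h4 : i ≤ 4) (p : ℤ) :
    ∀ q : (C.P i)⟦p⟧ ⟶ (C.Sp⟦(3:ℤ)⟧)⟦(1:ℤ)⟧,
      q ≫ (shiftFunctor D (1:ℤ)).map (theta C SD) = 0 → q = 0 := by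
  intro q hq
  set e := (shiftFunctorAdd' D (p - 1) 1 p (by ring)).hom.app (C.P i) with he
  set e' := (shiftFunctorAdd' D (p - 1) 1 p (by ring)).inv.app (C.P i) with he'
  obtain ⟨qbar, hqbar⟩ := span_H0 (1:ℤ) (e' ≫ q)
  have hzero : qbar ≫ theta C SD = 0 := by
    apply (shiftFunctor D (1:ℤ)).map_injective
    rw [Functor.map_comp, ← hqbar, Category.assoc, Functor.map_zero, hq, comp_zero]
  have hqbar0 : qbar = 0 := by
    have := (t_bij C SD h1 h4 (p - 1)).1 (a₁ := qbar) (a₂ := 0)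
    apply this
    rw [tmap_apply, tmap_apply, hzero, zero_comp]
  have : e' ≫ q = 0 := by rw [hqbar, hqbar0, Functor.map_zero]
  have hq2 : q = e ≫ (e' ≫ q) := by
    rw [← Category.assoc, he, he', Iso.hom_inv_id_app, Category.id_comp]
  rw [hq2, this, comp_zero]

include SD in
theorem theta_isIso
    (hfull : ∀ X : D, inTriaClosure {Y : D | ∃ i : ℕ, 1 ≤ i ∧ i ≤ 4 ∧ Y = C.P i} X) :
    IsIso (theta C SD) := by
  obtain ⟨Z, am, bm, hTθ⟩ := Pretriangulated.distinguished_cocone_triangle (theta C SD)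
  have hPZ : ∀ (i : ℕ), 1 ≤ i → i ≤ 4 → ∀ (p : ℤ) (h : (C.P i)⟦p⟧ ⟶ Z), h = 0 := by
    intro i h1 h4 p h
    have hcons : bm ≫ (shiftFunctor D (1:ℤ)).map (theta C SD) = 0 :=
      comp_distTriang_mor_zero₃₁ _ hTθ
    have hβ : h ≫ bm = 0 := by
      apply theta_inj_shift C SD h1 h4 p (h ≫ bm)
      rw [Category.assoc, hcons, comp_zero]
    obtain ⟨y, hy⟩ := Triangle.coyoneda_exact₃ _ hTθ h hβ
    obtain ⟨u, hu⟩ := (t_bij C SD h1 h4 p).2 y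
    have hy' : h = y ≫ am := hy
    rw [hy', ← hu, tmap_apply]
    change (u ≫ theta C SD) ≫ am = 0
    rw [Category.assoc]
    have hza : theta C SD ≫ am = 0 := comp_distTriang_mor_zero₁₂ _ hTθ
    rw [hza, comp_zero]
  have hallZ : ∀ X : D, inTriaClosure {Y : D | ∃ i : ℕ, 1 ≤ i ∧ i ≤ 4 ∧ Y = C.P i} X →
      ∀ (p : ℤ) (h : X ⟶ Z⟦p⟧), h = 0 := by
    intro X hX
    induction hX with
    | of hY =>
      obtain ⟨i, h1, h4, rfl⟩ := hY
      intro p h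
      exact vanish_V4 (hPZ i h1 h4 (-p)) p (by ring) h
    | zero hX => exact fun p h => hX.eq_of_src h 0
    | iso e _ ih =>
      intro p h
      have : e.hom ≫ h = 0 := ih p _
      rw [← Category.id_comp h, ← e.inv_hom_id, Category.assoc, this, comp_zero]
    | shift n _ ih =>
      intro p h
      exact vanish_V1 (ih (p - n)) n p (by ring) h
    | @ext T hT h₁ h₃ ih₁ ih₃ =>
      intro p h
      have h1 : T.mor₁ ≫ h = 0 := ih₁ p (T.mor₁ ≫ h)
      obtain ⟨g, hg⟩ := Triangle.yoneda_exact₂ _ hT h h1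
      rw [hg, ih₃ p g, comp_zero]
  have hidZ : 𝟙 Z = 0 := by
    have h0 := hallZ Z (hfull Z) 0 ((shiftFunctorZero D ℤ).inv.app Z)
    have : 𝟙 Z = (shiftFunctorZero D ℤ).inv.app Z ≫ (shiftFunctorZero D ℤ).hom.app Z := by
      simp
    rw [this, h0, zero_comp]
  have hZ : IsZero Z := by
    rw [IsZero.iff_id_eq_zero]
    exact hidZ
  exact (Triangle.isZero₃_iff_isIso₁ _ hTθ).mp hZ

include SD in
theorem main
    (hfull : ∀ X : D, inTriaClosure {Y : D | ∃ i : ℕ, 1 ≤ i ∧ i ≤ 4 ∧ Y = C.P i} X) :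
    homsAre C.Sp C.Sp (fun p => if p = 0 ∨ p = 3 then 1 else 0) ∧
      Nonempty (SD.S.obj C.Sp ≅ C.Sp⟦(3:ℤ)⟧) := by
  refine ⟨Sp_homsAre C SD, ?_⟩
  haveI := theta_isIso C SD hfull
  exact ⟨(asIso (theta C SD)).symm⟩


end Ctx

end Main

end S6


/-- Let `μ = 4` and let `S₊` (resp. `S₋`) be the module with `ℂ` at every
vertex, all `α_i` acting as the identity and all `β_i` as zero (resp. all `α_i` as zero and
all `β_i` as the identity); in `D` it is the totalization of its projective resolution
`P(4) →^{β₃} P(3) →^{α₂} P(2) →^{β₁} P(1)` (resp. with `α`'s and `β`'s exchanged).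
Then `S₊` and `S₋` are 3-spherical: `RHom(S_±, S_±) ≅ ℂ ⊕ ℂ[-3]` and `S_D(S_±) ≅ S_±[3]`. -/
theorem statement6 (St : Setup 4 D) (SD : SerreData D) (Sp Sm : D)
    (TDp : TotData (St.P 4) (St.P 3) (St.P 2) (St.P 1) Sp (St.b 3) (St.a 2) (St.b 1))
    (TDm : TotData (St.P 4) (St.P 3) (St.P 2) (St.P 1) Sm (St.a 3) (St.b 2) (St.a 1)) :
    (homsAre Sp Sp (fun p => if p = 0 ∨ p = 3 then 1 else 0) ∧
      Nonempty (SD.S.obj Sp ≅ Sp⟦(3 : ℤ)⟧)) ∧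
    (homsAre Sm Sm (fun p => if p = 0 ∨ p = 3 then 1 else 0) ∧
      Nonempty (SD.S.obj Sm ≅ Sm⟦(3 : ℤ)⟧)) := by
  constructor
  · exact S6.Ctx.main
      { P := St.P, a := St.a, b := St.b, hab := St.rel_ab, hba := St.rel_ba,
        hdims := St.hom_dims, hbasis := St.hom_basis, Sp := Sp, TD := TDp } SD St.full
  · exact S6.Ctx.main
      { P := St.P, a := St.b, b := St.a, hab := St.rel_ba, hba := St.rel_ab,
        hdims := St.hom_dims,
        hbasis := fun j k hj hk h4 => by
          obtain ⟨B, h0, h1⟩ := St.hom_basis j k hj hk h4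
          refine ⟨B.reindex (Equiv.swap 0 1), ?_, ?_⟩
          · simp only [Module.Basis.reindex_apply, Equiv.symm_swap, Equiv.swap_apply_left]
            exact h1
          · simp only [Module.Basis.reindex_apply, Equiv.symm_swap, Equiv.swap_apply_right]
            exact h0,
        Sp := Sm, TD := TDm } SD St.full

end CHS
end

section
/- Let μ = 4, and let S_+ and S_− be the ℂQ/I-modules with ℂ at every vertex, where for S_+ all α_i act as the identity and all β_i as zero, and for S_− all α_i act as zero and all β_i as the identity. Then RHom_D(S_+, P(i)) ≅ ℂ[−3] and RHom_D(S_−, P(i)) ≅ ℂ[−3] for every i = 1,…,4, where D = D^b mod(ℂQ/I) and P(i) is the indecomposable projective at vertex i. -/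
namespace CHS

open CategoryTheory Limits Pretriangulated

universe v u

variable {D : Type u} [Category.{v} D] [Preadditive D] [HasZeroObject D] [HasShift D ℤ]
  [∀ n : ℤ, (shiftFunctor D n).Additive] [Pretriangulated D] [Linear ℂ D]

/-! ### Auxiliary machinery -/

section Aux

set_option linter.unusedSectionVars false

/-- All morphisms from `X` to `Y` vanish. -/
def ZH (X Y : D) : Prop := ∀ f : X ⟶ Y, f = 0

/-- Every endomorphism of `X` is a scalar multiple of the identity. -/
def PinE (X : D) : Prop := ∀ u : X ⟶ X, ∃ c : ℂ, u = c • 𝟙 X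

lemma zh_iso {X X' Y Y' : D} (eX : X' ≅ X) (eY : Y ≅ Y') (h : ZH X Y) : ZH X' Y' := by
  intro g
  have hg : g = eX.hom ≫ (eX.inv ≫ g ≫ eY.inv) ≫ eY.hom := by simp
  rw [hg, h (eX.inv ≫ g ≫ eY.inv), zero_comp, comp_zero]

lemma pin_iso {X Y : D} (e : X ≅ Y) (h : PinE X) : PinE Y := by
  intro u
  obtain ⟨c, hc⟩ := h (e.hom ≫ u ≫ e.inv)
  refine ⟨c, ?_⟩
  have h2 := congrArg (fun t => e.inv ≫ t ≫ e.hom) hc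
  simpa [Linear.comp_smul, Linear.smul_comp] using h2

lemma zh_shift {X Y : D} (n : ℤ) (h : ZH X Y) : ZH (X⟦n⟧) (Y⟦n⟧) := by
  intro g
  obtain ⟨f, rfl⟩ := (shiftFunctor D n).map_surjective g
  rw [h f, Functor.map_zero]

lemma zz {X Y : D} (r a q : ℤ) (h : r + a = q) (hz : ZH X (Y⟦r⟧)) : ZH (X⟦a⟧) (Y⟦q⟧) :=
  zh_iso (Iso.refl _) (((shiftFunctorAdd' D r a q h).app Y).symm) (zh_shift a hz)

lemma zh_shift_cancel {X Y : D} (hz : ZH X (Y⟦(-1 : ℤ)⟧)) : ZH (X⟦(1 : ℤ)⟧) Y := by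
  intro g
  have e : X ≅ (X⟦(1:ℤ)⟧)⟦(-1:ℤ)⟧ :=
    ((shiftFunctorCompIsoId D (1 : ℤ) (-1 : ℤ) (by ring)).app X).symm
  have h1 : e.hom ≫ (shiftFunctor D (-1 : ℤ)).map g = 0 := hz _
  have h2 : (shiftFunctor D (-1 : ℤ)).map g = 0 := by
    calc (shiftFunctor D (-1 : ℤ)).map g
        = e.inv ≫ (e.hom ≫ (shiftFunctor D (-1 : ℤ)).map g) := by simp
      _ = 0 := by rw [h1, comp_zero]
  apply (shiftFunctor D (-1 : ℤ)).map_injective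
  rw [h2, Functor.map_zero]

/-- one-dimensionality from an equivalence with `Fin 1 → ℂ`. -/
lemma one_dim_span {M : Type*} [AddCommGroup M] [Module ℂ M]
    (e : M ≃ₗ[ℂ] (Fin 1 → ℂ)) {v : M} (hv : v ≠ 0) (u : M) : ∃ c : ℂ, u = c • v := by
  have hv0 : e v 0 ≠ 0 := by
    intro h0
    apply hv
    apply e.injective
    rw [map_zero]
    funext j
    fin_cases j
    exact h0
  refine ⟨e u 0 / e v 0, ?_⟩
  apply e.injective
  rw [map_smul]
  funext j
  fin_cases j
  show e u 0 = (e u 0 / e v 0) * e v 0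
  field_simp

lemma zero_of_equiv {M : Type*} [AddCommGroup M] [Module ℂ M]
    (e : M ≃ₗ[ℂ] (Fin 0 → ℂ)) (u : M) : u = 0 := by
  apply e.injective
  funext j
  exact j.elim0

lemma equiv_of_zero {M : Type*} [AddCommGroup M] [Module ℂ M] (h : ∀ u : M, u = 0) :
    Nonempty (M ≃ₗ[ℂ] (Fin 0 → ℂ)) := by
  refine ⟨LinearEquiv.ofLinear 0 0 ?_ ?_⟩
  · apply LinearMap.ext; intro x; funext j; exact j.elim0
  · apply LinearMap.ext; intro x; simp [h x]

lemma equiv_of_span {M : Type*} [AddCommGroup M] [Module ℂ M] {v : M} (hv : v ≠ 0)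
    (hspan : ∀ u : M, ∃ c : ℂ, u = c • v) : Nonempty (M ≃ₗ[ℂ] (Fin 1 → ℂ)) := by
  have hbij : Function.Bijective (LinearMap.toSpanSingleton ℂ M v) := by
    constructor
    · intro c c' hcc
      by_contra hne
      have h2 : (c - c') • v = 0 := by
        simp only [LinearMap.toSpanSingleton_apply] at hcc
        rw [sub_smul, hcc, sub_self]
      have h3 : c - c' ≠ 0 := sub_ne_zero_of_ne hne
      exact hv (by
        have := congrArg (fun w => (c - c')⁻¹ • w) h2
        simpa [smul_smul, inv_mul_cancel₀ h3] using this)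
    · intro u
      obtain ⟨c, hc⟩ := hspan u
      exact ⟨c, hc.symm⟩
  exact ⟨((LinearEquiv.ofBijective _ hbij).symm.trans
    (LinearEquiv.funUnique (Fin 1) ℂ ℂ).symm)⟩

lemma basis_span {M : Type*} [AddCommGroup M] [Module ℂ M] (B : Module.Basis (Fin 2) ℂ M) (g : M) :
    ∃ x y : ℂ, g = x • B 0 + y • B 1 := by
  refine ⟨B.repr g 0, B.repr g 1, ?_⟩
  have h := B.sum_repr g
  rw [Fin.sum_univ_two] at h
  exact h.symm

lemma basis_not_smul {M : Type*} [AddCommGroup M] [Module ℂ M] (B : Module.Basis (Fin 2) ℂ M)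
    (y : ℂ) : B 0 ≠ y • B 1 := by
  intro h
  have h2 := congrArg (fun m => B.repr m 0) h
  simp only [map_smul, Module.Basis.repr_self] at h2
  rw [Finsupp.single_eq_same] at h2
  simp only [Finsupp.smul_apply] at h2
  rw [Finsupp.single_eq_of_ne (by decide)] at h2
  simp at h2

end Aux

section Tri

lemma cov_z {T : Triangle D} (hT : T ∈ distinguishedTriangles (C := D)) {W : D}
    (h2 : ZH W T.obj₂) (h1 : ZH W (T.obj₁⟦(1 : ℤ)⟧)) : ZH W T.obj₃ := by
  intro f
  obtain ⟨g, hg⟩ := Triangle.coyoneda_exact₃ T hT f (h1 _)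
  rw [hg, h2 g, zero_comp]

lemma contra_z {T : Triangle D} (hT : T ∈ distinguishedTriangles (C := D)) {Z : D}
    (h2 : ZH T.obj₂ Z) (h1 : ZH (T.obj₁⟦(1 : ℤ)⟧) Z) : ZH T.obj₃ Z := by
  intro f
  obtain ⟨g, hg⟩ := Triangle.yoneda_exact₃ T hT f (h2 _)
  rw [hg, h1 g, comp_zero]

lemma smul_cancel {X Y : D} {c : ℂ} {f g : X ⟶ Y} (hc : c ≠ 0) (h : c • f = c • g) :
    f = g := by
  have := congrArg (fun t => c⁻¹ • t) h
  simpa [smul_smul, inv_mul_cancel₀ hc] using this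

lemma smul_zero_cancel {X Y : D} {c : ℂ} {f : X ⟶ Y} (hc : c ≠ 0) (h : c • f = 0) :
    f = 0 := by
  have := congrArg (fun t => c⁻¹ • t) h
  simpa [smul_smul, inv_mul_cancel₀ hc] using this

lemma units_smul_zero_cancel {X Y : D} (s : ℤˣ) {f : X ⟶ Y} (h : s • f = 0) : f = 0 := by
  have h2 : s⁻¹ • s • f = s⁻¹ • (0 : X ⟶ Y) := congrArg (fun t => s⁻¹ • t) h
  rwa [inv_smul_smul, smul_zero] at h2

/-- Pinning the scalar endomorphisms of a cone. -/
lemma pin_cone {T : Triangle D} (hT : T ∈ distinguishedTriangles (C := D))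
    (hBA : ZH T.obj₂ T.obj₁) (hBA1 : ZH T.obj₂ (T.obj₁⟦(1 : ℤ)⟧))
    (hA1B : ZH (T.obj₁⟦(1 : ℤ)⟧) T.obj₂)
    (hEndA : PinE T.obj₁) (hEndB : PinE T.obj₂) (hf : T.mor₁ ≠ 0) :
    PinE T.obj₃ ∧ (∀ g : T.obj₂ ⟶ T.obj₃, ∃ c : ℂ, g = c • T.mor₂) ∧
      ZH (T.obj₁⟦(1 : ℤ)⟧) T.obj₃ := by
  have hv : ZH (T.obj₁⟦(1 : ℤ)⟧) T.obj₃ := by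
    intro φ
    have h1 : φ ≫ T.mor₃ = 0 := by
      obtain ⟨g, hg⟩ := (shiftFunctor D (1 : ℤ)).map_surjective (φ ≫ T.mor₃)
      obtain ⟨c, hc⟩ := hEndA g
      have h2 : (φ ≫ T.mor₃) ≫ T.mor₁⟦(1 : ℤ)⟧' = 0 := by
        rw [Category.assoc, comp_distTriang_mor_zero₃₁ T hT, comp_zero]
      rw [← hg, ← Functor.map_comp] at h2
      have h3 : g ≫ T.mor₁ = 0 :=
        (shiftFunctor D (1 : ℤ)).map_injective (by rw [h2, Functor.map_zero])
      rw [hc, Linear.smul_comp, Category.id_comp] at h3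
      rcases eq_or_ne c 0 with rfl | hc0
      · rw [zero_smul] at hc
        rw [← hg, hc, Functor.map_zero]
      · exact absurd (smul_zero_cancel hc0 h3) hf
    obtain ⟨h', hh⟩ := Triangle.coyoneda_exact₃ T hT φ h1
    rw [hh, hA1B h', zero_comp]
  have hspan : ∀ g : T.obj₂ ⟶ T.obj₃, ∃ c : ℂ, g = c • T.mor₂ := by
    intro g
    obtain ⟨h, hh⟩ := Triangle.coyoneda_exact₃ T hT g (hBA1 _)
    obtain ⟨c, hc⟩ := hEndB h
    exact ⟨c, by rw [hh, hc, Linear.smul_comp, Category.id_comp]⟩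
  refine ⟨?_, hspan, hv⟩
  intro u
  obtain ⟨c, hc⟩ := hspan (T.mor₂ ≫ u)
  refine ⟨c, ?_⟩
  have h2 : T.mor₂ ≫ (u - c • 𝟙 _) = 0 := by
    rw [Preadditive.comp_sub, hc, Linear.comp_smul, Category.comp_id, sub_self]
  obtain ⟨g, hg⟩ := Triangle.yoneda_exact₃ T hT _ h2
  rw [hv g, comp_zero] at hg
  rwa [sub_eq_zero] at hg

/-- Pinning the scalar endomorphisms of the `+1`-shift of the first object. -/
lemma pin_shift {T : Triangle D} (hT : T ∈ distinguishedTriangles (C := D))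
    (hBA : ZH T.obj₂ T.obj₁) (hBA1 : ZH T.obj₂ (T.obj₁⟦(1 : ℤ)⟧))
    (hA1B : ZH (T.obj₁⟦(1 : ℤ)⟧) T.obj₂)
    (hEndA : PinE T.obj₁) (hEndB : PinE T.obj₂) (hf : T.mor₁ ≠ 0) :
    PinE (T.obj₁⟦(1 : ℤ)⟧) := by
  obtain ⟨hEndX, hspan, hv⟩ := pin_cone hT hBA hBA1 hA1B hEndA hEndB hf
  intro u
  have hTr := rot_of_distTriang T hT
  -- `T.mor₃ ≫ u ≫ T.mor₁⟦1⟧' = 0`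
  have h1 : (T.mor₃ ≫ u) ≫ T.rotate.mor₃ = 0 := by
    obtain ⟨g, hg⟩ := (shiftFunctor D (1 : ℤ)).map_surjective u
    obtain ⟨c₀, hc₀⟩ := hEndA g
    show (T.mor₃ ≫ u) ≫ (-(T.mor₁⟦(1 : ℤ)⟧')) = 0
    have hu : u ≫ T.mor₁⟦(1 : ℤ)⟧' = T.mor₁⟦(1 : ℤ)⟧' ≫ (c₀ • 𝟙 T.obj₂)⟦(1 : ℤ)⟧' := by
      rw [← hg, ← Functor.map_comp, ← Functor.map_comp, hc₀]
      congr 1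
      rw [Linear.smul_comp, Linear.comp_smul, Category.id_comp, Category.comp_id]
    rw [Preadditive.comp_neg, neg_eq_zero, Category.assoc, hu,
      ← Category.assoc, comp_distTriang_mor_zero₃₁ T hT, zero_comp]
  obtain ⟨w, hw⟩ := Triangle.coyoneda_exact₃ T.rotate hTr (T.mor₃ ≫ u) h1
  obtain ⟨c, hcw⟩ := hEndX w
  refine ⟨c, ?_⟩
  have h3 : T.mor₃ ≫ (u - c • 𝟙 _) = 0 := by
    have : (w ≫ T.rotate.mor₂ : T.obj₃ ⟶ T.obj₁⟦(1:ℤ)⟧) = w ≫ T.mor₃ := rfl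
    rw [Preadditive.comp_sub, sub_eq_zero]
    refine hw.trans ?_
    erw [this, hcw, Linear.smul_comp, Linear.comp_smul,
      Category.comp_id, Category.id_comp]
  have h4 : T.rotate.mor₂ ≫ (u - c • 𝟙 _) = 0 := h3
  obtain ⟨g', hg'⟩ := Triangle.yoneda_exact₃ T.rotate hTr _ h4
  obtain ⟨g₀, hg₀⟩ := (shiftFunctor D (1 : ℤ)).map_surjective g'
  have hg0 : g' = 0 := by
    rw [← hg₀, show g₀ = 0 from hBA g₀]; exact Functor.map_zero _ _ _
  rw [hg0, comp_zero] at hg'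
  erw [sub_eq_zero] at hg'
  exact hg'

end Tri



section Main

set_option linter.unusedSectionVars false
set_option maxHeartbeats 1000000

theorem mainSp (S : Setup 4 D) (Sp : D)
    (TD : TotData (S.P 4) (S.P 3) (S.P 2) (S.P 1) Sp (S.b 3) (S.a 2) (S.b 1)) :
    ∀ i : ℕ, 1 ≤ i → i ≤ 4 → homsAre Sp (S.P i) (fun p => if p = 3 then 1 else 0) := by
  -- basic vanishing between projectives
  have ZP : ∀ (x y : ℕ) (q : ℤ), 1 ≤ x → x ≤ 4 → 1 ≤ y → y ≤ 4 → (q ≠ 0 ∨ x < y) →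
      ZH (S.P x) ((S.P y)⟦q⟧) := by
    intro x y q hx1 hx4 hy1 hy4 hq
    obtain ⟨e⟩ := S.hom_dims x y hx1 hx4 hy1 hy4 q
    have hc : (if q = 0 then (if x = y then 1 else if y < x then 2 else 0) else 0) = 0 := by
      rcases hq with h | h
      · rw [if_neg h]
      · rcases eq_or_ne q 0 with rfl | h0
        · rw [if_pos rfl, if_neg (by omega), if_neg (by omega)]
        · rw [if_neg h0]
    exact zero_of_equiv (e.trans (LinearEquiv.funCongrLeft ℂ ℂ (finCongr hc.symm)))
  have ZPs : ∀ (x y : ℕ) (n q : ℤ), 1 ≤ x → x ≤ 4 → 1 ≤ y → y ≤ 4 → (q ≠ n ∨ x < y) →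
      ZH ((S.P x)⟦n⟧) ((S.P y)⟦q⟧) := by
    intro x y n q hx1 hx4 hy1 hy4 hq
    refine zz (q - n) n q (by ring) (ZP x y (q - n) hx1 hx4 hy1 hy4 ?_)
    rcases hq with h | h
    · exact Or.inl (by omega)
    · exact Or.inr h
  have ZPraw : ∀ (x y : ℕ), 1 ≤ x → x ≤ 4 → 1 ≤ y → y ≤ 4 → x < y → ZH (S.P x) (S.P y) :=
    fun x y hx1 hx4 hy1 hy4 h =>
      zh_iso (Iso.refl _) ((shiftFunctorZero D ℤ).app (S.P y))
        (ZP x y 0 hx1 hx4 hy1 hy4 (Or.inr h))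
  -- identities are nonzero, and endomorphisms of the projectives are scalars
  have hone : ∀ x : ℕ, 1 ≤ x → x ≤ 4 → 𝟙 (S.P x) ≠ 0 := by
    intro x hx1 hx4 h
    obtain ⟨e⟩ := S.hom_dims x x hx1 hx4 hx1 hx4 0
    replace e : _ ≃ₗ[ℂ] (Fin 1 → ℂ) :=
      e.trans (LinearEquiv.funCongrLeft ℂ ℂ (finCongr (by simp)))
    have h0 : ∀ f : S.P x ⟶ (S.P x)⟦(0:ℤ)⟧, f = 0 := fun f => by
      rw [← Category.id_comp f, h, zero_comp]
    have h1 : e (e.symm (fun _ => 1)) 0 = (0 : ℂ) := by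
      rw [h0 (e.symm fun _ => 1), map_zero]; rfl
    rw [e.apply_symm_apply] at h1
    exact one_ne_zero h1
  have hpin0 : ∀ x : ℕ, 1 ≤ x → x ≤ 4 → PinE (S.P x) := by
    intro x hx1 hx4
    obtain ⟨e⟩ := S.hom_dims x x hx1 hx4 hx1 hx4 0
    replace e : _ ≃ₗ[ℂ] (Fin 1 → ℂ) :=
      e.trans (LinearEquiv.funCongrLeft ℂ ℂ (finCongr (by simp)))
    have hvne : ((shiftFunctorZero D ℤ).app (S.P x)).inv ≠ 0 := by
      intro h
      apply hone x hx1 hx4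
      have h2 : 𝟙 (S.P x) = ((shiftFunctorZero D ℤ).app (S.P x)).inv ≫
          ((shiftFunctorZero D ℤ).app (S.P x)).hom := by simp
      rw [h2, h, zero_comp]
    intro u
    obtain ⟨c, hc⟩ := one_dim_span e hvne (u ≫ ((shiftFunctorZero D ℤ).app (S.P x)).inv)
    refine ⟨c, ?_⟩
    calc u = (u ≫ ((shiftFunctorZero D ℤ).app (S.P x)).inv) ≫
        ((shiftFunctorZero D ℤ).app (S.P x)).hom := by simp
    _ = (c • ((shiftFunctorZero D ℤ).app (S.P x)).inv) ≫
        ((shiftFunctorZero D ℤ).app (S.P x)).hom := by rw [hc]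
    _ = c • 𝟙 _ := by
        rw [Linear.smul_comp]
        congr 1
        simp
  -- bases
  obtain ⟨B11, hB11a, hB11b⟩ := S.hom_basis 1 1 (by norm_num) (by norm_num) (by norm_num)
  obtain ⟨B12, hB12a, hB12b⟩ := S.hom_basis 1 2 (by norm_num) (by norm_num) (by norm_num)
  obtain ⟨B13, hB13a, hB13b⟩ := S.hom_basis 1 3 (by norm_num) (by norm_num) (by norm_num)
  obtain ⟨B21, hB21a, hB21b⟩ := S.hom_basis 2 1 (by norm_num) (by norm_num) (by norm_num)
  obtain ⟨B22, hB22a, hB22b⟩ := S.hom_basis 2 2 (by norm_num) (by norm_num) (by norm_num)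
  obtain ⟨B31, hB31a, hB31b⟩ := S.hom_basis 3 1 (by norm_num) (by norm_num) (by norm_num)
  -- nonzero morphisms
  have hb3 : S.b 3 ≠ 0 := by
    intro h
    refine Module.Basis.ne_zero B31 1 ?_
    rw [hB31b]
    show S.b 3 ≫ 𝟙 (S.P 3) = 0
    rw [h, zero_comp]
  have hb2 : S.b 2 ≠ 0 := by
    intro h
    refine Module.Basis.ne_zero B21 1 ?_
    rw [hB21b]
    show S.b 2 ≫ 𝟙 (S.P 2) = 0
    rw [h, zero_comp]
  have ha2 : S.a 2 ≠ 0 := by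
    intro h
    refine Module.Basis.ne_zero B21 0 ?_
    rw [hB21a]
    show S.a 2 ≫ 𝟙 (S.P 2) = 0
    rw [h, zero_comp]
  have hb1 : S.b 1 ≠ 0 := by
    intro h
    refine Module.Basis.ne_zero B11 1 ?_
    rw [hB11b]
    show S.b 1 ≫ 𝟙 (S.P 1) = 0
    rw [h, zero_comp]
  have hv₁ : TD.v₁ ≠ 0 := fun h => ha2 (by rw [← TD.fac₁, h, comp_zero])
  have hv₂ : TD.v₂ ≠ 0 := fun h => hb1 (by rw [← TD.fac₂, h, comp_zero])
  -- the triangles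
  set T₁ : Triangle D := Triangle.mk (S.b 3) TD.ι₁ TD.δ₁ with hT₁def
  have hT₁ : T₁ ∈ distinguishedTriangles (C := D) := TD.tri₁
  set T₂ : Triangle D := Triangle.mk TD.v₁ TD.ι₂ TD.δ₂ with hT₂def
  have hT₂ : T₂ ∈ distinguishedTriangles (C := D) := TD.tri₂
  set T₃ : Triangle D := Triangle.mk TD.v₂ TD.ι₃ TD.δ₃ with hT₃def
  have hT₃ : T₃ ∈ distinguishedTriangles (C := D) := TD.tri₃
  -- covariant vanishing for the cones
  have ZPK1 : ∀ (x : ℕ) (q : ℤ), 1 ≤ x → x ≤ 3 → (q ≠ 0 ∨ x ≤ 2) →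
      ZH (S.P x) ((TD.K₁)⟦q⟧) := by
    intro x q hx1 hx3 hq
    have hTs := Triangle.shift_distinguished T₁ hT₁ q
    refine cov_z hTs ?_ ?_
    · show ZH (S.P x) ((S.P 3)⟦q⟧)
      refine ZP x 3 q hx1 (by omega) (by norm_num) (by norm_num) ?_
      rcases hq with h | h
      · exact Or.inl h
      · exact Or.inr (by omega)
    · show ZH (S.P x) (((S.P 4)⟦q⟧)⟦(1:ℤ)⟧)
      exact zh_iso (Iso.refl _) ((shiftFunctorAdd' D q 1 (q+1) rfl).app (S.P 4))
        (ZP x 4 (q+1) hx1 (by omega) (by norm_num) (by norm_num) (Or.inr (by omega)))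
  have ZPK2 : ∀ q : ℤ, ZH (S.P 1) ((TD.K₂)⟦q⟧) := by
    intro q
    have hTs := Triangle.shift_distinguished T₂ hT₂ q
    refine cov_z hTs ?_ ?_
    · show ZH (S.P 1) ((S.P 2)⟦q⟧)
      exact ZP 1 2 q (by norm_num) (by norm_num) (by norm_num) (by norm_num)
        (Or.inr (by norm_num))
    · show ZH (S.P 1) (((TD.K₁)⟦q⟧)⟦(1:ℤ)⟧)
      exact zh_iso (Iso.refl _) ((shiftFunctorAdd' D q 1 (q+1) rfl).app TD.K₁)
        (ZPK1 1 (q+1) (by norm_num) (by norm_num) (Or.inr (by norm_num)))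
  -- contravariant vanishing for the cones
  have ZK1P : ∀ (y : ℕ) (q : ℤ), 1 ≤ y → y ≤ 4 → q ≠ 0 → q ≠ 1 →
      ZH TD.K₁ ((S.P y)⟦q⟧) := by
    intro y q hy1 hy4 h0 h1
    refine contra_z hT₁ ?_ ?_
    · show ZH (S.P 3) ((S.P y)⟦q⟧)
      exact ZP 3 y q (by norm_num) (by norm_num) hy1 hy4 (Or.inl h0)
    · show ZH ((S.P 4)⟦(1:ℤ)⟧) ((S.P y)⟦q⟧)
      exact ZPs 4 y 1 q (by norm_num) (by norm_num) hy1 hy4 (Or.inl h1)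
  have ZK2P : ∀ (y : ℕ) (q : ℤ), 1 ≤ y → y ≤ 4 → q ≠ 0 → q ≠ 1 → q ≠ 2 →
      ZH TD.K₂ ((S.P y)⟦q⟧) := by
    intro y q hy1 hy4 h0 h1 h2
    refine contra_z hT₂ ?_ ?_
    · show ZH (S.P 2) ((S.P y)⟦q⟧)
      exact ZP 2 y q (by norm_num) (by norm_num) hy1 hy4 (Or.inl h0)
    · show ZH ((TD.K₁)⟦(1:ℤ)⟧) ((S.P y)⟦q⟧)
      exact zz (q-1) 1 q (by ring) (ZK1P y (q-1) hy1 hy4 (by omega) (by omega))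
  -- the shifted triangles used in the main factorisation chain
  set T₂s : Triangle D := (CategoryTheory.shiftFunctor (Triangle D) (1:ℤ)).obj T₂ with hT₂sdef
  have hT₂s : T₂s ∈ distinguishedTriangles (C := D) := Triangle.shift_distinguished T₂ hT₂ 1
  set T₁ss : Triangle D := (CategoryTheory.shiftFunctor (Triangle D) (2:ℤ)).obj T₁ with hT₁ssdef
  have hT₁ss : T₁ss ∈ distinguishedTriangles (C := D) := Triangle.shift_distinguished T₁ hT₁ 2
  set conK : ((TD.K₁)⟦(2:ℤ)⟧) ≅ (((TD.K₁)⟦(1:ℤ)⟧)⟦(1:ℤ)⟧) :=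
    (shiftFunctorAdd' D 1 1 2 (by norm_num)).app TD.K₁ with hconKdef
  set con4 : ((S.P 4)⟦(3:ℤ)⟧) ≅ (((S.P 4)⟦(2:ℤ)⟧)⟦(1:ℤ)⟧) :=
    (shiftFunctorAdd' D 2 1 3 (by norm_num)).app (S.P 4) with hcon4def
  set con3 : ((S.P 3)⟦(3:ℤ)⟧) ≅ (((S.P 3)⟦(2:ℤ)⟧)⟦(1:ℤ)⟧) :=
    (shiftFunctorAdd' D 2 1 3 (by norm_num)).app (S.P 3) with hcon3def
  set conP2 : ((S.P 2)⟦(2:ℤ)⟧) ≅ (((S.P 2)⟦(1:ℤ)⟧)⟦(1:ℤ)⟧) :=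
    (shiftFunctorAdd' D 1 1 2 (by norm_num)).app (S.P 2) with hconP2def
  set d21 : (TD.K₂)⟦(1:ℤ)⟧ ⟶ (TD.K₁)⟦(2:ℤ)⟧ := T₂s.mor₃ ≫ conK.inv with hd21
  set d10 : (TD.K₁)⟦(2:ℤ)⟧ ⟶ (S.P 4)⟦(3:ℤ)⟧ := T₁ss.mor₃ ≫ con4.inv with hd10
  set E : Sp ⟶ (S.P 4)⟦(3:ℤ)⟧ := TD.δ₃ ≫ d21 ≫ d10 with hE
  -- explicit first and second morphisms of the shifted triangles
  have hm2s1 : T₂s.mor₁ = (1:ℤ).negOnePow • ((TD.v₁)⟦(1:ℤ)⟧') := rfl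
  have hm2s2 : T₂s.mor₂ = (1:ℤ).negOnePow • ((TD.ι₂)⟦(1:ℤ)⟧') := rfl
  have hm1ss1 : T₁ss.mor₁ = (2:ℤ).negOnePow • ((S.b 3)⟦(2:ℤ)⟧') := rfl
  have hm1ss2 : T₁ss.mor₂ = (2:ℤ).negOnePow • ((TD.ι₁)⟦(2:ℤ)⟧') := rfl
  -- factorisation steps
  have st1 : ∀ {Z : D} (f : Sp ⟶ Z), TD.ι₃ ≫ f = 0 →
      ∃ f₂ : (TD.K₂)⟦(1:ℤ)⟧ ⟶ Z, f = TD.δ₃ ≫ f₂ := by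
    intro Z f hf
    exact Triangle.yoneda_exact₂ T₃.rotate (rot_of_distTriang T₃ hT₃) f hf
  have st2 : ∀ {Z : D} (f₂ : (TD.K₂)⟦(1:ℤ)⟧ ⟶ Z), ZH ((S.P 2)⟦(1:ℤ)⟧) Z →
      ∃ g : (TD.K₁)⟦(2:ℤ)⟧ ⟶ Z, f₂ = d21 ≫ g := by
    intro Z f₂ hz
    obtain ⟨g₀, hg₀⟩ := Triangle.yoneda_exact₃ T₂s hT₂s f₂ (hz _)
    refine ⟨conK.hom ≫ g₀, ?_⟩
    erw [hd21, Category.assoc, Iso.inv_hom_id_assoc]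
    exact hg₀
  have st3 : ∀ {Z : D} (g : (TD.K₁)⟦(2:ℤ)⟧ ⟶ Z), ZH ((S.P 3)⟦(2:ℤ)⟧) Z →
      ∃ h : (S.P 4)⟦(3:ℤ)⟧ ⟶ Z, g = d10 ≫ h := by
    intro Z g hz
    obtain ⟨h₀, hh₀⟩ := Triangle.yoneda_exact₃ T₁ss hT₁ss g (hz _)
    refine ⟨con4.hom ≫ h₀, ?_⟩
    erw [hd10, Category.assoc, Iso.inv_hom_id_assoc]
    exact hh₀
  -- injectivity steps
  have st1' : ∀ {Z : D} (f₂ : (TD.K₂)⟦(1:ℤ)⟧ ⟶ Z), ZH ((S.P 1)⟦(1:ℤ)⟧) Z →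
      TD.δ₃ ≫ f₂ = 0 → f₂ = 0 := by
    intro Z f₂ hz h
    have hrr := rot_of_distTriang _ (rot_of_distTriang T₃ hT₃)
    obtain ⟨χ, hχ⟩ := Triangle.yoneda_exact₂ T₃.rotate.rotate hrr f₂ h
    erw [hχ, hz χ, comp_zero]
    rfl
  have st2' : ∀ {Z : D} (g : (TD.K₁)⟦(2:ℤ)⟧ ⟶ Z), ZH ((S.P 2)⟦(2:ℤ)⟧) Z →
      d21 ≫ g = 0 → g = 0 := by
    intro Z g hz h
    erw [hd21, Category.assoc] at h
    have hrr := rot_of_distTriang _ (rot_of_distTriang T₂s hT₂s)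
    obtain ⟨χ, hχ⟩ := Triangle.yoneda_exact₂ T₂s.rotate.rotate hrr (conK.inv ≫ g) h
    have hχ0 : χ = 0 := zh_iso (conP2.symm) (Iso.refl _) hz χ
    rw [hχ0, comp_zero] at hχ
    calc g = conK.hom ≫ (conK.inv ≫ g) := by simp
    _ = 0 := by erw [hχ, comp_zero]
  have st3' : ∀ {Z : D} (h : (S.P 4)⟦(3:ℤ)⟧ ⟶ Z), d10 ≫ h = 0 →
      ∃ m : (S.P 3)⟦(3:ℤ)⟧ ⟶ Z, h = ((S.b 3)⟦(3:ℤ)⟧') ≫ m := by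
    intro Z h hzero
    erw [hd10, Category.assoc] at hzero
    have hrr := rot_of_distTriang _ (rot_of_distTriang T₁ss hT₁ss)
    obtain ⟨χ, hχ⟩ := Triangle.yoneda_exact₂ T₁ss.rotate.rotate hrr (con4.inv ≫ h) hzero
    have hmor : T₁ss.rotate.rotate.mor₂ = -((T₁ss.mor₁)⟦(1:ℤ)⟧') := rfl
    erw [hmor, hm1ss1, Functor.map_units_smul] at hχ
    have hnat : ((S.b 3)⟦(3:ℤ)⟧') ≫ con3.hom = con4.hom ≫ ((((S.b 3)⟦(2:ℤ)⟧'))⟦(1:ℤ)⟧') := by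
      rw [hcon3def, hcon4def]
      exact ((shiftFunctorAdd' D 2 1 3 (by norm_num)).hom.naturality (S.b 3))
    refine ⟨-((2:ℤ).negOnePow • (con3.hom ≫ χ)), ?_⟩
    have h1 : h = con4.hom ≫ ((-((2:ℤ).negOnePow • (((S.b 3)⟦(2:ℤ)⟧')⟦(1:ℤ)⟧'))) ≫ χ) := by
      erw [← hχ]; simp
    rw [h1]
    have e : con4.hom ≫ (-((2:ℤ).negOnePow • (((S.b 3)⟦(2:ℤ)⟧')⟦(1:ℤ)⟧'))) =
        -((2:ℤ).negOnePow • ((S.b 3)⟦(3:ℤ)⟧' ≫ con3.hom)) := by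
      rw [Preadditive.comp_neg, Linear.comp_units_smul, hnat]
    erw [← Category.assoc, e, Preadditive.neg_comp, Linear.units_smul_comp, Category.assoc]
    simp only [Preadditive.comp_neg, Linear.comp_units_smul]
  -- the "killing" relations
  have dk3 : TD.δ₃ ≫ ((TD.v₂)⟦(1:ℤ)⟧') = 0 := comp_distTriang_mor_zero₃₁ T₃ hT₃
  have dk2 : d21 ≫ ((TD.v₁)⟦(2:ℤ)⟧') = 0 := by
    have hnat' : (((TD.v₁)⟦(1:ℤ)⟧')⟦(1:ℤ)⟧') ≫ conP2.inv = conK.inv ≫ ((TD.v₁)⟦(2:ℤ)⟧') := by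
      rw [hconP2def, hconKdef]
      exact ((shiftFunctorAdd' D 1 1 2 (by norm_num)).inv.naturality TD.v₁)
    have hz : T₂s.mor₃ ≫ ((T₂s.mor₁)⟦(1:ℤ)⟧') = 0 := comp_distTriang_mor_zero₃₁ T₂s hT₂s
    erw [hm2s1, Functor.map_units_smul, Linear.comp_units_smul] at hz
    have hz2 : T₂s.mor₃ ≫ (((TD.v₁)⟦(1:ℤ)⟧')⟦(1:ℤ)⟧') = 0 := units_smul_zero_cancel _ hz
    erw [hd21, Category.assoc, ← hnat', ← Category.assoc, hz2, zero_comp]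
  have dk1 : d10 ≫ ((S.b 3)⟦(3:ℤ)⟧') = 0 := by
    have hnat' : (((S.b 3)⟦(2:ℤ)⟧')⟦(1:ℤ)⟧') ≫ con3.inv = con4.inv ≫ ((S.b 3)⟦(3:ℤ)⟧') := by
      rw [hcon3def, hcon4def]
      exact ((shiftFunctorAdd' D 2 1 3 (by norm_num)).inv.naturality (S.b 3))
    have hz : T₁ss.mor₃ ≫ ((T₁ss.mor₁)⟦(1:ℤ)⟧') = 0 := comp_distTriang_mor_zero₃₁ T₁ss hT₁ss
    erw [hm1ss1, Functor.map_units_smul, Linear.comp_units_smul] at hz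
    have hz2 : T₁ss.mor₃ ≫ (((S.b 3)⟦(2:ℤ)⟧')⟦(1:ℤ)⟧') = 0 := units_smul_zero_cancel _ hz
    erw [hd10, Category.assoc, ← hnat', ← Category.assoc, hz2, zero_comp]
  -- generic vanishing of `Hom(Sp, Z)`
  have hvan : ∀ (Z : D), (∀ φ : S.P 1 ⟶ Z, TD.v₂ ≫ φ = 0 → φ = 0) →
      ZH ((S.P 2)⟦(1:ℤ)⟧) Z → ZH ((S.P 3)⟦(2:ℤ)⟧) Z → ZH ((S.P 4)⟦(3:ℤ)⟧) Z → ZH Sp Z := by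
    intro Z hk v2 v3 v4 f
    have hι : TD.ι₃ ≫ f = 0 := by
      apply hk
      rw [← Category.assoc]
      have h0 : TD.v₂ ≫ TD.ι₃ = 0 := comp_distTriang_mor_zero₁₂ T₃ hT₃
      rw [h0, zero_comp]
    obtain ⟨f₂, hf₂⟩ := st1 f hι
    obtain ⟨g, hg⟩ := st2 f₂ v2
    obtain ⟨h, hh⟩ := st3 g v3
    rw [hf₂, hg, hh, v4 h, comp_zero, comp_zero, comp_zero]
  -- vanishing of `Hom(Sp, Y⟦1⟧)`
  have hvan1 : ∀ (Y : D),
      (∀ ψ : S.P 2 ⟶ Y, S.a 2 ≫ ψ = 0 → ∃ w : S.P 1 ⟶ Y, ψ = S.b 1 ≫ w) →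
      ZH (S.P 1) (Y⟦(1:ℤ)⟧) → ZH ((S.P 3)⟦(2:ℤ)⟧) (Y⟦(1:ℤ)⟧) →
      ZH ((S.P 4)⟦(3:ℤ)⟧) (Y⟦(1:ℤ)⟧) → ZH Sp (Y⟦(1:ℤ)⟧) := by
    intro Y hk2 hZ1 hZ3 hZ4 f
    obtain ⟨f₂, hf₂⟩ := st1 f (hZ1 _)
    obtain ⟨ψ₂, hψ₂⟩ := (shiftFunctor D (1:ℤ)).map_surjective (T₂s.mor₂ ≫ f₂)
    have hv₁ψ : TD.v₁ ≫ ψ₂ = 0 := by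
      have h0 : T₂s.mor₁ ≫ T₂s.mor₂ ≫ f₂ = 0 := by
        erw [← Category.assoc, comp_distTriang_mor_zero₁₂ T₂s hT₂s, zero_comp]
      erw [← hψ₂, hm2s1, Linear.units_smul_comp, ← Functor.map_comp] at h0
      have h1 := units_smul_zero_cancel _ h0
      exact (shiftFunctor D (1:ℤ)).map_injective (by rw [Functor.map_zero]; exact h1)
    have ha2ψ : S.a 2 ≫ ψ₂ = 0 := by
      have h0 : TD.ι₁ ≫ TD.v₁ ≫ ψ₂ = 0 := by rw [hv₁ψ, comp_zero]
      erw [← Category.assoc, TD.fac₁] at h0; exact h0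
    obtain ⟨w₀, hw₀⟩ := hk2 ψ₂ ha2ψ
    have hψ₂c : ψ₂ = TD.ι₂ ≫ (TD.v₂ ≫ w₀) := by rw [← Category.assoc, TD.fac₂]; exact hw₀
    have hζ : T₂s.mor₂ ≫ ((1:ℤ).negOnePow⁻¹ • ((TD.v₂ ≫ w₀)⟦(1:ℤ)⟧')) = T₂s.mor₂ ≫ f₂ := by
      erw [← hψ₂, hψ₂c]
      erw [Linear.comp_units_smul, hm2s2, Linear.units_smul_comp, inv_smul_smul,
        ← Functor.map_comp]
      rfl
    have hrest : T₂s.mor₂ ≫ (f₂ - (1:ℤ).negOnePow⁻¹ • ((TD.v₂ ≫ w₀)⟦(1:ℤ)⟧')) = 0 := by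
      erw [Preadditive.comp_sub, hζ, sub_self]
    obtain ⟨g₀, hg₀⟩ := Triangle.yoneda_exact₃ T₂s hT₂s _ hrest
    have hterm1 : TD.δ₃ ≫ ((1:ℤ).negOnePow⁻¹ • ((TD.v₂ ≫ w₀)⟦(1:ℤ)⟧')) = 0 := by
      rw [Linear.comp_units_smul, Functor.map_comp, ← Category.assoc, dk3, zero_comp, smul_zero]
    have hterm2 : T₂s.mor₃ ≫ g₀ = d21 ≫ (conK.hom ≫ g₀) := by
      erw [hd21, Category.assoc, Iso.inv_hom_id_assoc]
      rfl
    obtain ⟨h₀, hh₀⟩ := st3 (conK.hom ≫ g₀) hZ3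
    have hgz : TD.δ₃ ≫ (f₂ - (1:ℤ).negOnePow⁻¹ • ((TD.v₂ ≫ w₀)⟦(1:ℤ)⟧')) = 0 := by
      rw [hg₀]
      show TD.δ₃ ≫ (T₂s.mor₃ ≫ g₀) = 0
      erw [hterm2, hh₀, hZ4 h₀, comp_zero, comp_zero, comp_zero]
    have hsplit : TD.δ₃ ≫ f₂ = TD.δ₃ ≫ ((1:ℤ).negOnePow⁻¹ • ((TD.v₂ ≫ w₀)⟦(1:ℤ)⟧')) +
        TD.δ₃ ≫ (f₂ - (1:ℤ).negOnePow⁻¹ • ((TD.v₂ ≫ w₀)⟦(1:ℤ)⟧')) := by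
      rw [← Preadditive.comp_add]
      congr 1
      abel
    rw [hf₂, hsplit, hterm1, hgz, add_zero]
  -- vanishing of `Hom(Sp, Y⟦2⟧)`
  have hvan2 : ∀ (Y : D),
      (∀ ψ : S.P 3 ⟶ Y, S.b 3 ≫ ψ = 0 → ∃ w : S.P 2 ⟶ Y, ψ = S.a 2 ≫ w) →
      ZH (S.P 1) (Y⟦(2:ℤ)⟧) → ZH ((S.P 2)⟦(1:ℤ)⟧) (Y⟦(2:ℤ)⟧) →
      ZH ((S.P 4)⟦(3:ℤ)⟧) (Y⟦(2:ℤ)⟧) → ZH Sp (Y⟦(2:ℤ)⟧) := by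
    intro Y hk3 hZ1 hZ2 hZ4 f
    obtain ⟨f₂, hf₂⟩ := st1 f (hZ1 _)
    obtain ⟨g, hg⟩ := st2 f₂ hZ2
    obtain ⟨ψ₃, hψ₃⟩ := (shiftFunctor D (2:ℤ)).map_surjective (T₁ss.mor₂ ≫ g)
    have hb3ψ : S.b 3 ≫ ψ₃ = 0 := by
      have h0 : T₁ss.mor₁ ≫ T₁ss.mor₂ ≫ g = 0 := by
        erw [← Category.assoc, comp_distTriang_mor_zero₁₂ T₁ss hT₁ss, zero_comp]
      erw [← hψ₃, hm1ss1, Linear.units_smul_comp, ← Functor.map_comp] at h0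
      have h1 := units_smul_zero_cancel _ h0
      exact (shiftFunctor D (2:ℤ)).map_injective (by rw [Functor.map_zero]; exact h1)
    obtain ⟨w₀, hw₀⟩ := hk3 ψ₃ hb3ψ
    have hψ₃c : ψ₃ = TD.ι₁ ≫ (TD.v₁ ≫ w₀) := by rw [← Category.assoc, TD.fac₁]; exact hw₀
    have hζ : T₁ss.mor₂ ≫ ((2:ℤ).negOnePow⁻¹ • ((TD.v₁ ≫ w₀)⟦(2:ℤ)⟧')) = T₁ss.mor₂ ≫ g := by
      erw [← hψ₃, hψ₃c]
      erw [Linear.comp_units_smul, hm1ss2, Linear.units_smul_comp, inv_smul_smul,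
        ← Functor.map_comp]
      rfl
    have hrest : T₁ss.mor₂ ≫ (g - (2:ℤ).negOnePow⁻¹ • ((TD.v₁ ≫ w₀)⟦(2:ℤ)⟧')) = 0 := by
      erw [Preadditive.comp_sub, hζ, sub_self]
    obtain ⟨h₀, hh₀⟩ := Triangle.yoneda_exact₃ T₁ss hT₁ss _ hrest
    have hterm1 : d21 ≫ ((2:ℤ).negOnePow⁻¹ • ((TD.v₁ ≫ w₀)⟦(2:ℤ)⟧')) = 0 := by
      rw [Linear.comp_units_smul, Functor.map_comp, ← Category.assoc, dk2, zero_comp, smul_zero]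
    have hgz : d21 ≫ (g - (2:ℤ).negOnePow⁻¹ • ((TD.v₁ ≫ w₀)⟦(2:ℤ)⟧')) = 0 := by
      rw [hh₀]
      show d21 ≫ (T₁ss.mor₃ ≫ h₀) = 0
      have h1 : T₁ss.mor₃ ≫ h₀ = d10 ≫ (con4.hom ≫ h₀) := by
        erw [hd10, Category.assoc, Iso.inv_hom_id_assoc]
        rfl
      erw [h1, hZ4 (con4.hom ≫ h₀), comp_zero, comp_zero]
    have hsplit : d21 ≫ g = d21 ≫ ((2:ℤ).negOnePow⁻¹ • ((TD.v₁ ≫ w₀)⟦(2:ℤ)⟧')) +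
        d21 ≫ (g - (2:ℤ).negOnePow⁻¹ • ((TD.v₁ ≫ w₀)⟦(2:ℤ)⟧')) := by
      rw [← Preadditive.comp_add]
      congr 1
      abel
    rw [hf₂, hg, hsplit, hterm1, hgz, add_zero, comp_zero]
  -- the two kernel computations used for the target `P 1`
  have hker2P1 : ∀ ψ : S.P 2 ⟶ S.P 1, S.a 2 ≫ ψ = 0 →
      ∃ w : S.P 1 ⟶ S.P 1, ψ = S.b 1 ≫ w := by
    intro ψ hψ
    obtain ⟨x, y, hxy⟩ := basis_span B11 ψ
    have h1 : S.a 2 ≫ B11 0 = pathComp S.P S.a 1 2 := by rw [hB11a]; rfl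
    have h2 : S.a 2 ≫ B11 1 = 0 := by
      rw [hB11b]
      show S.a 2 ≫ (S.b 1 ≫ 𝟙 (S.P 1)) = 0
      rw [← Category.assoc]
      have hr : S.a 2 ≫ S.b 1 = 0 := S.rel_ab 1
      rw [hr, zero_comp]
    have hx0 : x = 0 := by
      have h3 : x • pathComp S.P S.a 1 2 = 0 := by
        rw [← h1]
        calc x • (S.a 2 ≫ B11 0)
            = S.a 2 ≫ (x • B11 0 + y • B11 1) := by
              rw [Preadditive.comp_add, Linear.comp_smul, Linear.comp_smul, h2, smul_zero,
                add_zero]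
          _ = S.a 2 ≫ ψ := by rw [← hxy]
          _ = 0 := hψ
      by_contra hx
      have hpane : pathComp S.P S.a 1 2 ≠ 0 := by
        have hne := Module.Basis.ne_zero B12 0
        rw [hB12a] at hne; exact hne
      exact hpane (smul_zero_cancel hx h3)
    refine ⟨y • 𝟙 (S.P 1), ?_⟩
    rw [hxy, hx0, zero_smul, zero_add, hB11b, Linear.comp_smul]
    congr 1
  have hker1P1 : ∀ φ : S.P 1 ⟶ (S.P 1)⟦(0:ℤ)⟧, TD.v₂ ≫ φ = 0 → φ = 0 := by
    intro φ hφ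
    obtain ⟨c, hcφ⟩ := hpin0 1 (by norm_num) (by norm_num)
      (φ ≫ ((shiftFunctorZero D ℤ).app (S.P 1)).hom)
    have hφ2 : φ = c • ((shiftFunctorZero D ℤ).app (S.P 1)).inv := by
      calc φ = (φ ≫ ((shiftFunctorZero D ℤ).app (S.P 1)).hom) ≫
          ((shiftFunctorZero D ℤ).app (S.P 1)).inv := by simp
      _ = (c • 𝟙 _) ≫ ((shiftFunctorZero D ℤ).app (S.P 1)).inv := by rw [hcφ]
      _ = c • ((shiftFunctorZero D ℤ).app (S.P 1)).inv := by
          rw [Linear.smul_comp, Category.id_comp]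
    rcases eq_or_ne c 0 with rfl | hc0
    · rw [hφ2, zero_smul]
    · exfalso
      apply hv₂
      have h3 : TD.v₂ ≫ φ = c • (TD.v₂ ≫ ((shiftFunctorZero D ℤ).app (S.P 1)).inv) := by
        rw [hφ2, Linear.comp_smul]
      rw [hφ] at h3
      have h4 : TD.v₂ ≫ ((shiftFunctorZero D ℤ).app (S.P 1)).inv = 0 :=
        smul_zero_cancel hc0 h3.symm
      calc TD.v₂ = (TD.v₂ ≫ ((shiftFunctorZero D ℤ).app (S.P 1)).inv) ≫
          ((shiftFunctorZero D ℤ).app (S.P 1)).hom := by simp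
      _ = 0 := by rw [h4, zero_comp]
  have hSpP1₀ : ZH Sp ((S.P 1)⟦(0:ℤ)⟧) :=
    hvan _ hker1P1
      (ZPs 2 1 1 0 (by norm_num) (by norm_num) (by norm_num) (by norm_num)
        (Or.inl (by norm_num)))
      (ZPs 3 1 2 0 (by norm_num) (by norm_num) (by norm_num) (by norm_num)
        (Or.inl (by norm_num)))
      (ZPs 4 1 3 0 (by norm_num) (by norm_num) (by norm_num) (by norm_num)
        (Or.inl (by norm_num)))
  have hSpP1₁ : ZH Sp ((S.P 1)⟦(1:ℤ)⟧) :=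
    hvan1 (S.P 1) hker2P1
      (ZP 1 1 1 (by norm_num) (by norm_num) (by norm_num) (by norm_num)
        (Or.inl (by norm_num)))
      (ZPs 3 1 2 1 (by norm_num) (by norm_num) (by norm_num) (by norm_num)
        (Or.inl (by norm_num)))
      (ZPs 4 1 3 1 (by norm_num) (by norm_num) (by norm_num) (by norm_num)
        (Or.inl (by norm_num)))
  -- raw auxiliary vanishings for the pinning ladder
  have hZP2K1 : ZH (S.P 2) TD.K₁ :=
    zh_iso (Iso.refl _) ((shiftFunctorZero D ℤ).app TD.K₁)
      (ZPK1 2 0 (by norm_num) (by norm_num) (Or.inr (by norm_num)))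
  have hZP1K2raw : ZH (S.P 1) TD.K₂ :=
    zh_iso (Iso.refl _) ((shiftFunctorZero D ℤ).app TD.K₂) (ZPK2 0)
  have hK11P2 : ZH ((TD.K₁)⟦(1:ℤ)⟧) (S.P 2) :=
    zh_iso (Iso.refl _) ((shiftFunctorZero D ℤ).app (S.P 2))
      (zz (-1) 1 0 (by ring)
        (ZK1P 2 (-1) (by norm_num) (by norm_num) (by norm_num) (by norm_num)))
  have hK21P1 : ZH ((TD.K₂)⟦(1:ℤ)⟧) (S.P 1) :=
    zh_iso (Iso.refl _) ((shiftFunctorZero D ℤ).app (S.P 1))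
      (zz (-1) 1 0 (by ring)
        (ZK2P 1 (-1) (by norm_num) (by norm_num) (by norm_num) (by norm_num) (by norm_num)))
  have hι₃ : TD.ι₃ ≠ 0 := by
    intro h
    obtain ⟨g, hg⟩ := Triangle.coyoneda_exact₂ T₃ hT₃ (𝟙 (S.P 1)) (by
      show 𝟙 (S.P 1) ≫ TD.ι₃ = 0
      rw [h, comp_zero])
    erw [hZP1K2raw g, zero_comp] at hg
    exact hone 1 (by norm_num) (by norm_num) hg
  have hZP1Spm1 : ZH (S.P 1) (Sp⟦(-1:ℤ)⟧) := by
    have hTs := Triangle.shift_distinguished T₃ hT₃ (-1)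
    refine cov_z hTs ?_ ?_
    · show ZH (S.P 1) ((S.P 1)⟦(-1:ℤ)⟧)
      exact ZP 1 1 (-1) (by norm_num) (by norm_num) (by norm_num) (by norm_num)
        (Or.inl (by norm_num))
    · show ZH (S.P 1) (((TD.K₂)⟦(-1:ℤ)⟧)⟦(1:ℤ)⟧)
      exact zh_iso (Iso.refl _) ((shiftFunctorAdd' D (-1) 1 0 (by ring)).app TD.K₂) (ZPK2 0)
  have hP11Sp : ZH ((S.P 1)⟦(1:ℤ)⟧) Sp := zh_shift_cancel hZP1Spm1
  have hSpP1raw : ZH Sp (S.P 1) :=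
    zh_iso (Iso.refl _) ((shiftFunctorZero D ℤ).app (S.P 1)) hSpP1₀
  -- the pinning ladder
  have pinstep : ∀ n : ℤ, (∀ x : ℕ, 1 ≤ x → x ≤ 4 → PinE ((S.P x)⟦n⟧)) →
      ∀ x : ℕ, 1 ≤ x → x ≤ 4 → PinE ((S.P x)⟦n + 1⟧) := by
    intro n hPn
    have pinK1 : PinE ((TD.K₁)⟦n⟧) := by
      refine (pin_cone (Triangle.shift_distinguished T₁ hT₁ n)
        (ZPs 3 4 n n (by norm_num) (by norm_num) (by norm_num) (by norm_num)
          (Or.inr (by norm_num)))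
        (zh_iso (Iso.refl _) ((shiftFunctorAdd' D n 1 (n+1) rfl).app (S.P 4))
          (ZPs 3 4 n (n+1) (by norm_num) (by norm_num) (by norm_num) (by norm_num)
            (Or.inr (by norm_num))))
        (zh_iso (((shiftFunctorAdd' D n 1 (n+1) rfl).app (S.P 4)).symm) (Iso.refl _)
          (ZPs 4 3 (n+1) n (by norm_num) (by norm_num) (by norm_num) (by norm_num)
            (Or.inl (by omega))))
        (hPn 4 (by norm_num) (by norm_num)) (hPn 3 (by norm_num) (by norm_num)) ?_).1
      show n.negOnePow • ((S.b 3)⟦n⟧') ≠ 0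
      intro h
      exact hb3 ((shiftFunctor D n).map_injective
        (by rw [Functor.map_zero]; exact units_smul_zero_cancel _ h))
    have pinK2 : PinE ((TD.K₂)⟦n⟧) := by
      refine (pin_cone (Triangle.shift_distinguished T₂ hT₂ n)
        (zh_shift n hZP2K1)
        (zh_iso (Iso.refl _) (shiftComm TD.K₁ 1 n)
          (zh_shift n (ZPK1 2 1 (by norm_num) (by norm_num) (Or.inl (by norm_num)))))
        (zh_iso ((shiftComm TD.K₁ 1 n).symm) (Iso.refl _) (zh_shift n hK11P2))
        pinK1 (hPn 2 (by norm_num) (by norm_num)) ?_).1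
      show n.negOnePow • ((TD.v₁)⟦n⟧') ≠ 0
      intro h
      exact hv₁ ((shiftFunctor D n).map_injective
        (by rw [Functor.map_zero]; exact units_smul_zero_cancel _ h))
    have pinSp : PinE (Sp⟦n⟧) := by
      refine (pin_cone (Triangle.shift_distinguished T₃ hT₃ n)
        (zh_shift n hZP1K2raw)
        (zh_iso (Iso.refl _) (shiftComm TD.K₂ 1 n) (zh_shift n (ZPK2 1)))
        (zh_iso ((shiftComm TD.K₂ 1 n).symm) (Iso.refl _) (zh_shift n hK21P1))
        pinK2 (hPn 1 (by norm_num) (by norm_num)) ?_).1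
      show n.negOnePow • ((TD.v₂)⟦n⟧') ≠ 0
      intro h
      exact hv₂ ((shiftFunctor D n).map_injective
        (by rw [Functor.map_zero]; exact units_smul_zero_cancel _ h))
    have bridgeP : ∀ (u v : ℕ) (f₀ : S.P u ⟶ S.P v), 1 ≤ v → v < u → u ≤ 4 → f₀ ≠ 0 →
        PinE ((S.P u)⟦n + 1⟧) := by
      intro u v f₀ hv1 hvu hu4 hf₀
      obtain ⟨C, ι, δ, hTb⟩ := Pretriangulated.distinguished_cocone_triangle ((f₀)⟦n⟧')
      have hp := pin_shift hTb
        (ZPs v u n n hv1 (by omega) (by omega) hu4 (Or.inr hvu))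
        (zh_iso (Iso.refl _) ((shiftFunctorAdd' D n 1 (n+1) rfl).app (S.P u))
          (ZPs v u n (n+1) hv1 (by omega) (by omega) hu4 (Or.inr hvu)))
        (zh_iso (((shiftFunctorAdd' D n 1 (n+1) rfl).app (S.P u)).symm) (Iso.refl _)
          (ZPs u v (n+1) n (by omega) hu4 hv1 (by omega) (Or.inl (by omega))))
        (hPn u (by omega) hu4) (hPn v hv1 (by omega))
        (by
          show (f₀)⟦n⟧' ≠ 0
          intro h
          exact hf₀ ((shiftFunctor D n).map_injective (by rw [Functor.map_zero]; exact h)))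
      exact pin_iso (((shiftFunctorAdd' D n 1 (n+1) rfl).app (S.P u)).symm) hp
    have pinP1' : PinE ((S.P 1)⟦n + 1⟧) := by
      obtain ⟨C, ι, δ, hTb⟩ := Pretriangulated.distinguished_cocone_triangle
        (((CategoryTheory.shiftFunctor (Triangle D) n).obj T₃).mor₂)
      have hp := pin_shift hTb
        (zh_shift n hSpP1raw)
        (zh_iso (Iso.refl _) (shiftComm (S.P 1) 1 n) (zh_shift n hSpP1₁))
        (zh_iso ((shiftComm (S.P 1) 1 n).symm) (Iso.refl _) (zh_shift n hP11Sp))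
        (hPn 1 (by norm_num) (by norm_num)) pinSp
        (by
          show n.negOnePow • ((TD.ι₃)⟦n⟧') ≠ 0
          intro h
          exact hι₃ ((shiftFunctor D n).map_injective
            (by rw [Functor.map_zero]; exact units_smul_zero_cancel _ h)))
      exact pin_iso (((shiftFunctorAdd' D n 1 (n+1) rfl).app (S.P 1)).symm) hp
    intro x hx1 hx4
    interval_cases x
    · exact pinP1'
    · exact bridgeP 2 1 (S.b 1) (by norm_num) (by norm_num) (by norm_num) hb1
    · exact bridgeP 3 2 (S.b 2) (by norm_num) (by norm_num) (by norm_num) hb2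
    · exact bridgeP 4 3 (S.b 3) (by norm_num) (by norm_num) (by norm_num) hb3
  have pin3 : ∀ x : ℕ, 1 ≤ x → x ≤ 4 → PinE ((S.P x)⟦(3:ℤ)⟧) := by
    have l0 : ∀ x : ℕ, 1 ≤ x → x ≤ 4 → PinE ((S.P x)⟦(0:ℤ)⟧) := fun x h1 h4 =>
      pin_iso (((shiftFunctorZero D ℤ).app (S.P x)).symm) (hpin0 x h1 h4)
    have l1 := pinstep 0 l0
    have l2 := pinstep (0+1) l1
    have l3 := pinstep (0+1+1) l2
    intro x hx1 hx4
    have hx := l3 x hx1 hx4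
    have he : ((0:ℤ)+1+1+1) = 3 := by norm_num
    rw [he] at hx
    exact hx
  -- now fix the target projective
  intro i hi1 hi4
  obtain ⟨α, hαspan, hαindep, hker2, hker3, hker1⟩ :
      ∃ α : S.P 4 ⟶ S.P i,
        (∀ ψ : S.P 4 ⟶ S.P i, ∃ (x : ℂ) (w : S.P 3 ⟶ S.P i), ψ = x • α + S.b 3 ≫ w) ∧
        (∀ w : S.P 3 ⟶ S.P i, α ≠ S.b 3 ≫ w) ∧
        (∀ ψ : S.P 2 ⟶ S.P i, S.a 2 ≫ ψ = 0 → ∃ w : S.P 1 ⟶ S.P i, ψ = S.b 1 ≫ w) ∧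
        (∀ ψ : S.P 3 ⟶ S.P i, S.b 3 ≫ ψ = 0 → ∃ w : S.P 2 ⟶ S.P i, ψ = S.a 2 ≫ w) ∧
        (∀ φ : S.P 1 ⟶ (S.P i)⟦(0:ℤ)⟧, TD.v₂ ≫ φ = 0 → φ = 0) := by
    have hrelba : S.b 3 ≫ S.a 2 = 0 := S.rel_ba 2
    interval_cases i
    · -- i = 1
      refine ⟨pathComp S.P S.a 1 3, ?_, ?_, hker2P1, ?_, hker1P1⟩
      · intro ψ
        obtain ⟨x, y, hxy⟩ := basis_span B13 ψ
        refine ⟨x, y • pathComp S.P S.b 1 2, ?_⟩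
        rw [hxy, hB13a, hB13b, Linear.comp_smul]
        congr 1
      · intro w h
        obtain ⟨x', y', hxy⟩ := basis_span B12 w
        have hba : S.b 3 ≫ pathComp S.P S.a 1 2 = 0 := by
          show S.b 3 ≫ (S.a 2 ≫ pathComp S.P S.a 1 1) = 0
          rw [← Category.assoc, hrelba, zero_comp]
        have h2 : pathComp S.P S.a 1 3 = y' • pathComp S.P S.b 1 3 := by
          rw [h, hxy, Preadditive.comp_add, Linear.comp_smul, Linear.comp_smul, hB12a,
            hB12b, hba, smul_zero, zero_add]
          congr 1
        exact basis_not_smul B13 y' (by rw [hB13a, hB13b]; exact h2)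
      · intro ψ hψ
        obtain ⟨x', y', hxy⟩ := basis_span B12 ψ
        have hba : S.b 3 ≫ pathComp S.P S.a 1 2 = 0 := by
          show S.b 3 ≫ (S.a 2 ≫ pathComp S.P S.a 1 1) = 0
          rw [← Category.assoc, hrelba, zero_comp]
        have h2 : y' • pathComp S.P S.b 1 3 = 0 := by
          rw [← hψ, hxy, Preadditive.comp_add, Linear.comp_smul, Linear.comp_smul, hB12a,
            hB12b, hba, smul_zero, zero_add]
          congr 1
        have hy0 : y' = 0 := by
          by_contra hy
          refine Module.Basis.ne_zero B13 1 ?_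
          rw [hB13b]
          exact smul_zero_cancel hy h2
        refine ⟨x' • pathComp S.P S.a 1 1, ?_⟩
        rw [hxy, hy0, zero_smul, add_zero, hB12a, Linear.comp_smul]
        congr 1
    · -- i = 2
      refine ⟨pathComp S.P S.a 2 2, ?_, ?_, ?_, ?_, ?_⟩
      · intro ψ
        obtain ⟨x, y, hxy⟩ := basis_span B22 ψ
        refine ⟨x, y • pathComp S.P S.b 2 1, ?_⟩
        rw [hxy, hB22a, hB22b, Linear.comp_smul]
        congr 1
      · intro w h
        obtain ⟨x', y', hxy⟩ := basis_span B21 w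
        have hba : S.b 3 ≫ pathComp S.P S.a 2 1 = 0 := by
          show S.b 3 ≫ (S.a 2 ≫ 𝟙 (S.P 2)) = 0
          rw [← Category.assoc, hrelba, zero_comp]
        have h2 : pathComp S.P S.a 2 2 = y' • pathComp S.P S.b 2 2 := by
          rw [h, hxy, Preadditive.comp_add, Linear.comp_smul, Linear.comp_smul, hB21a,
            hB21b, hba, smul_zero, zero_add]
          congr 1
        exact basis_not_smul B22 y' (by rw [hB22a, hB22b]; exact h2)
      · intro ψ hψ
        obtain ⟨c, hc⟩ := hpin0 2 (by norm_num) (by norm_num) ψ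
        have hc0 : c = 0 := by
          by_contra hcz
          apply ha2
          have h2 : S.a 2 ≫ ψ = c • S.a 2 := by
            rw [hc, Linear.comp_smul, Category.comp_id]
          rw [hψ] at h2
          exact smul_zero_cancel hcz h2.symm
        exact ⟨0, by rw [hc, hc0, zero_smul, comp_zero]⟩
      · intro ψ hψ
        obtain ⟨x', y', hxy⟩ := basis_span B21 ψ
        have hba : S.b 3 ≫ pathComp S.P S.a 2 1 = 0 := by
          show S.b 3 ≫ (S.a 2 ≫ 𝟙 (S.P 2)) = 0
          rw [← Category.assoc, hrelba, zero_comp]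
        have h2 : y' • pathComp S.P S.b 2 2 = 0 := by
          rw [← hψ, hxy, Preadditive.comp_add, Linear.comp_smul, Linear.comp_smul, hB21a,
            hB21b, hba, smul_zero, zero_add]
          congr 1
        have hy0 : y' = 0 := by
          by_contra hy
          refine Module.Basis.ne_zero B22 1 ?_
          rw [hB22b]
          exact smul_zero_cancel hy h2
        refine ⟨x' • 𝟙 (S.P 2), ?_⟩
        rw [hxy, hy0, zero_smul, add_zero, hB21a, Linear.comp_smul]
        congr 1
      · intro φ _
        exact ZP 1 2 0 (by norm_num) (by norm_num) (by norm_num) (by norm_num)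
          (Or.inr (by norm_num)) φ
    · -- i = 3
      refine ⟨pathComp S.P S.a 3 1, ?_, ?_, ?_, ?_, ?_⟩
      · intro ψ
        obtain ⟨x, y, hxy⟩ := basis_span B31 ψ
        refine ⟨x, y • 𝟙 (S.P 3), ?_⟩
        rw [hxy, hB31a, hB31b, Linear.comp_smul]
        congr 1
      · intro w h
        obtain ⟨c, hc⟩ := hpin0 3 (by norm_num) (by norm_num) w
        have h2 : pathComp S.P S.a 3 1 = c • pathComp S.P S.b 3 1 := by
          rw [h, hc, Linear.comp_smul]
          congr 1
        exact basis_not_smul B31 c (by rw [hB31a, hB31b]; exact h2)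
      · intro ψ _
        exact ⟨0, by
          rw [ZPraw 2 3 (by norm_num) (by norm_num) (by norm_num) (by norm_num)
            (by norm_num) ψ, comp_zero]⟩
      · intro ψ hψ
        obtain ⟨c, hc⟩ := hpin0 3 (by norm_num) (by norm_num) ψ
        have hc0 : c = 0 := by
          by_contra hcz
          apply hb3
          have h2 : S.b 3 ≫ ψ = c • S.b 3 := by
            rw [hc, Linear.comp_smul, Category.comp_id]
          rw [hψ] at h2
          exact smul_zero_cancel hcz h2.symm
        exact ⟨0, by rw [hc, hc0, zero_smul, comp_zero]⟩
      · intro φ _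
        exact ZP 1 3 0 (by norm_num) (by norm_num) (by norm_num) (by norm_num)
          (Or.inr (by norm_num)) φ
    · -- i = 4
      refine ⟨𝟙 (S.P 4), ?_, ?_, ?_, ?_, ?_⟩
      · intro ψ
        obtain ⟨c, hc⟩ := hpin0 4 (by norm_num) (by norm_num) ψ
        exact ⟨c, 0, by rw [hc, comp_zero, add_zero]⟩
      · intro w h
        rw [ZPraw 3 4 (by norm_num) (by norm_num) (by norm_num) (by norm_num)
          (by norm_num) w, comp_zero] at h
        exact hone 4 (by norm_num) (by norm_num) h
      · intro ψ _
        exact ⟨0, by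
          rw [ZPraw 2 4 (by norm_num) (by norm_num) (by norm_num) (by norm_num)
            (by norm_num) ψ, comp_zero]⟩
      · intro ψ _
        exact ⟨0, by
          rw [ZPraw 3 4 (by norm_num) (by norm_num) (by norm_num) (by norm_num)
            (by norm_num) ψ, comp_zero]⟩
      · intro φ _
        exact ZP 1 4 0 (by norm_num) (by norm_num) (by norm_num) (by norm_num)
          (Or.inr (by norm_num)) φ
  -- the final dimension count
  intro p
  by_cases hp3 : p = 3
  · subst hp3
    show Nonempty ((Sp ⟶ (S.P i)⟦(3:ℤ)⟧) ≃ₗ[ℂ] (Fin 1 → ℂ))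
    have hspan : ∀ f : Sp ⟶ (S.P i)⟦(3:ℤ)⟧, ∃ c : ℂ, f = c • (E ≫ ((α)⟦(3:ℤ)⟧')) := by
      intro f
      have hι : TD.ι₃ ≫ f = 0 :=
        ZP 1 i 3 (by norm_num) (by norm_num) hi1 hi4 (Or.inl (by norm_num)) _
      obtain ⟨f₂, hf₂⟩ := st1 f hι
      obtain ⟨g, hg⟩ := st2 f₂
        (ZPs 2 i 1 3 (by norm_num) (by norm_num) hi1 hi4 (Or.inl (by norm_num)))
      obtain ⟨h, hh⟩ := st3 g
        (ZPs 3 i 2 3 (by norm_num) (by norm_num) hi1 hi4 (Or.inl (by norm_num)))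
      obtain ⟨ψ, hψ⟩ := (shiftFunctor D (3:ℤ)).map_surjective h
      obtain ⟨x, w, hxw⟩ := hαspan ψ
      obtain ⟨x', hx'⟩ := pin3 i hi1 hi4 ((x • 𝟙 (S.P i))⟦(3:ℤ)⟧')
      refine ⟨x', ?_⟩
      have hψeq : ψ = α ≫ (x • 𝟙 (S.P i)) + S.b 3 ≫ w := by
        rw [hxw, Linear.comp_smul, Category.comp_id]
      have hEh : f = E ≫ h := by
        rw [hf₂, hg, hh, hE]
        simp only [Category.assoc]
      have hEb3 : E ≫ ((S.b 3)⟦(3:ℤ)⟧') = 0 := by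
        rw [hE, Category.assoc, Category.assoc, dk1, comp_zero, comp_zero]
      calc f = E ≫ (ψ⟦(3:ℤ)⟧') := by rw [hEh, hψ]
      _ = E ≫ ((α ≫ (x • 𝟙 (S.P i)))⟦(3:ℤ)⟧' + (S.b 3 ≫ w)⟦(3:ℤ)⟧') := by
          rw [← Functor.map_add, ← hψeq]
      _ = E ≫ (((α)⟦(3:ℤ)⟧') ≫ ((x • 𝟙 (S.P i))⟦(3:ℤ)⟧')) +
          E ≫ (((S.b 3)⟦(3:ℤ)⟧') ≫ (w⟦(3:ℤ)⟧')) := by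
          rw [Functor.map_comp, Functor.map_comp, Preadditive.comp_add]
      _ = x' • (E ≫ ((α)⟦(3:ℤ)⟧')) := by
          rw [← Category.assoc, ← Category.assoc, hEb3, zero_comp, add_zero, hx',
            Linear.comp_smul, Category.comp_id]
    have he₀ne : (E ≫ ((α)⟦(3:ℤ)⟧')) ≠ 0 := by
      intro h0
      rw [hE] at h0
      have h0' : TD.δ₃ ≫ (d21 ≫ (d10 ≫ ((α)⟦(3:ℤ)⟧'))) = 0 := by
        calc TD.δ₃ ≫ (d21 ≫ (d10 ≫ ((α)⟦(3:ℤ)⟧')))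
            = (TD.δ₃ ≫ d21 ≫ d10) ≫ ((α)⟦(3:ℤ)⟧') := by simp only [Category.assoc]
          _ = 0 := h0
      have h2 := st1' _
        (ZPs 1 i 1 3 (by norm_num) (by norm_num) hi1 hi4 (Or.inl (by norm_num))) h0'
      have h3 := st2' _
        (ZPs 2 i 2 3 (by norm_num) (by norm_num) hi1 hi4 (Or.inl (by norm_num))) h2
      obtain ⟨m, hm⟩ := st3' _ h3
      obtain ⟨μ, hμ⟩ := (shiftFunctor D (3:ℤ)).map_surjective m
      refine hαindep μ ?_
      apply (shiftFunctor D (3:ℤ)).map_injective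
      rw [Functor.map_comp, hμ]
      exact hm
    exact equiv_of_span he₀ne hspan
  · show Nonempty ((Sp ⟶ (S.P i)⟦p⟧) ≃ₗ[ℂ] (Fin (if p = 3 then 1 else 0) → ℂ))
    rw [if_neg hp3]
    refine equiv_of_zero ?_
    rcases eq_or_ne p 0 with rfl | hp0
    · exact hvan _ hker1
        (ZPs 2 i 1 0 (by norm_num) (by norm_num) hi1 hi4 (Or.inl (by norm_num)))
        (ZPs 3 i 2 0 (by norm_num) (by norm_num) hi1 hi4 (Or.inl (by norm_num)))
        (ZPs 4 i 3 0 (by norm_num) (by norm_num) hi1 hi4 (Or.inl (by norm_num)))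
    rcases eq_or_ne p 1 with rfl | hp1
    · exact hvan1 (S.P i) hker2
        (ZP 1 i 1 (by norm_num) (by norm_num) hi1 hi4 (Or.inl (by norm_num)))
        (ZPs 3 i 2 1 (by norm_num) (by norm_num) hi1 hi4 (Or.inl (by norm_num)))
        (ZPs 4 i 3 1 (by norm_num) (by norm_num) hi1 hi4 (Or.inl (by norm_num)))
    rcases eq_or_ne p 2 with rfl | hp2
    · exact hvan2 (S.P i) hker3
        (ZP 1 i 2 (by norm_num) (by norm_num) hi1 hi4 (Or.inl (by norm_num)))
        (ZPs 2 i 1 2 (by norm_num) (by norm_num) hi1 hi4 (Or.inl (by norm_num)))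
        (ZPs 4 i 3 2 (by norm_num) (by norm_num) hi1 hi4 (Or.inl (by norm_num)))
    · exact hvan _ (fun φ _ => ZP 1 i p (by norm_num) (by norm_num) hi1 hi4 (Or.inl hp0) φ)
        (ZPs 2 i 1 p (by norm_num) (by norm_num) hi1 hi4 (Or.inl hp1))
        (ZPs 3 i 2 p (by norm_num) (by norm_num) hi1 hi4 (Or.inl hp2))
        (ZPs 4 i 3 p (by norm_num) (by norm_num) hi1 hi4 (Or.inl hp3))

/-- The same presentation with the roles of the `α`- and `β`-arrows exchanged. -/
def Setup.swap {μ : ℕ} (S : Setup μ D) : Setup μ D where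
  P := S.P
  a := S.b
  b := S.a
  rel_ab := S.rel_ba
  rel_ba := S.rel_ab
  hom_dims := S.hom_dims
  hom_basis := by
    intro j k hj hk hjk
    obtain ⟨B, h0, h1⟩ := S.hom_basis j k hj hk hjk
    refine ⟨B.reindex (Equiv.swap 0 1), ?_, ?_⟩
    · rw [Module.Basis.reindex_apply, show (Equiv.swap (0:Fin 2) 1).symm 0 = 1 from by decide]
      exact h1
    · rw [Module.Basis.reindex_apply, show (Equiv.swap (0:Fin 2) 1).symm 1 = 0 from by decide]
      exact h0
  full := S.full

end Main

/-- Let `μ = 4` and `S₊`, `S₋` as above.  Then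
`RHom(S₊, P(i)) ≅ ℂ[-3]` and `RHom(S₋, P(i)) ≅ ℂ[-3]` for every `i = 1, …, 4`. -/
theorem statement7 (St : Setup 4 D) (Sp Sm : D)
    (TDp : TotData (St.P 4) (St.P 3) (St.P 2) (St.P 1) Sp (St.b 3) (St.a 2) (St.b 1))
    (TDm : TotData (St.P 4) (St.P 3) (St.P 2) (St.P 1) Sm (St.a 3) (St.b 2) (St.a 1)) :
    ∀ i : ℕ, 1 ≤ i → i ≤ 4 →
      homsAre Sp (St.P i) (fun p => if p = 3 then 1 else 0) ∧
      homsAre Sm (St.P i) (fun p => if p = 3 then 1 else 0) := by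
  intro i hi1 hi4
  exact ⟨mainSp St Sp TDp i hi1 hi4, mainSp St.swap Sm TDm i hi1 hi4⟩

end CHS
end
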